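/- arXiv:1607.00103 — 4 statements merged into one kernel-verified Lean document; each statement's English description precedes it below -/
import Mathlib

section
/- If X is a homogeneous locally conical connected separable metric space that is not a 1-manifold, and F is a finite subset of X, then X \ F is path connected. -/
open Set Topology ENNReal

noncomputable section

/-- The extended half-line `(0, ∞]`, as a subspace of `ℝ≥0∞` (with the order topology). -/
abbrev PosInf : Type := ↥(Set.Ioi (0 : ℝ≥0∞))

/-- The point `∞` of `(0, ∞]`. -/
abbrev PosInf.infty : PosInf := ⟨⊤, by simp⟩

/-- `IsConeChart φ U p` : `φ : Y × (0,∞] → X` is a cone chart for the open set `U ⊆ X` with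
vertex `p`, i.e. `Y` is a nonempty compact metrizable space, `φ` is a continuous proper map
into `U` carrying `Y × {∞}` to `{p}` and restricting to a homeomorphism (an embedding with
the correct image) of `Y × (0,∞)` onto `U \ {p}`. -/
structure IsConeChart {Y X : Type*} [TopologicalSpace Y] [TopologicalSpace X]
    (φ : Y × PosInf → X) (U : Set X) (p : X) : Prop where
  nonempty_base : Nonempty Y
  compact_base : CompactSpace Y
  metrizable_base : TopologicalSpace.MetrizableSpace Y
  isOpen_target : IsOpen U
  continuous : Continuous φ
  mapsTo : ∀ z, φ z ∈ U
  proper : ∀ K : Set X, K ⊆ U → IsCompact K → IsCompact (φ ⁻¹' K)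
  vertex_mem : p ∈ U
  map_infty : ∀ y : Y, φ (y, PosInf.infty) = p
  isEmbedding_restrict :
    Topology.IsEmbedding ({z : Y × PosInf | z.2 ≠ PosInf.infty}.restrict φ)
  image_restrict : φ '' {z : Y × PosInf | z.2 ≠ PosInf.infty} = U \ {p}

/-- The image under a chart `φ : Y × (0,∞] → X` of the points whose parameter lies in
the set `S ⊆ (0,∞]` (specified as a subset of `ℝ≥0∞`). -/
def chartIm {Y X : Type*} (φ : Y × PosInf → X) (S : Set ℝ≥0∞) : Set X :=
  φ '' {z | (z.2 : ℝ≥0∞) ∈ S}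

/-- Two cone charts `φ`, `ψ` are 2-interlaced:  `φ(Y × (1,∞]) ⊇ ψ(Z × [2,∞])`,
`ψ(Z × (2,∞]) ⊇ φ(Y × [3,∞])` and `φ(Y × (3,∞]) ⊇ ψ(Z × [4,∞])`. -/
def Interlaced2 {Y Z X : Type*} (φ : Y × PosInf → X) (ψ : Z × PosInf → X) : Prop :=
  chartIm ψ (Ici 2) ⊆ chartIm φ (Ioi 1) ∧
  chartIm φ (Ici 3) ⊆ chartIm ψ (Ioi 2) ∧
  chartIm ψ (Ici 4) ⊆ chartIm φ (Ioi 3)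

/-- Two cone charts `φ`, `ψ` are `k`-interlaced: `φ(Y × (2i-1,∞]) ⊇ ψ(Z × [2i,∞])` for
`1 ≤ i ≤ k` and `ψ(Z × (2i,∞]) ⊇ φ(Y × [2i+1,∞])` for `1 ≤ i ≤ k-1`. -/
def InterlacedK {Y Z X : Type*} (k : ℕ) (φ : Y × PosInf → X) (ψ : Z × PosInf → X) : Prop :=
  (∀ i : ℕ, 1 ≤ i → i ≤ k →
    chartIm ψ (Ici (2 * (i : ℝ≥0∞))) ⊆ chartIm φ (Ioi (2 * (i : ℝ≥0∞) - 1))) ∧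
  (∀ i : ℕ, 1 ≤ i → i ≤ k - 1 →
    chartIm φ (Ici (2 * (i : ℝ≥0∞) + 1)) ⊆ chartIm ψ (Ioi (2 * (i : ℝ≥0∞))))

/-- `U` is an open cone neighbourhood in `X`, i.e. it admits a cone chart. -/
def IsOpenConeNbhd {X : Type*} [TopologicalSpace X] (U : Set X) : Prop :=
  ∃ (Y : Type) (_ : TopologicalSpace Y) (φ : Y × PosInf → X) (p : X), IsConeChart φ U p

/-- `X` is locally conical: every point has an open neighbourhood admitting a cone chart. -/
def LocallyConical (X : Type*) [TopologicalSpace X] : Prop :=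
  ∀ x : X, ∃ U : Set X, x ∈ U ∧ IsOpenConeNbhd U

/-- `X` is homogeneous: any point can be carried to any other point by a homeomorphism. -/
def Homogeneous (X : Type*) [TopologicalSpace X] : Prop :=
  ∀ p q : X, ∃ h : X ≃ₜ X, h p = q

/-- `X` is strongly `n`-homogeneous: every bijection between two `n`-element subsets of `X`
extends to a homeomorphism of `X` onto itself. -/
def StronglyNHomogeneous (X : Type*) [TopologicalSpace X] (n : ℕ) : Prop :=
  ∀ A B : Set X, A.ncard = n → B.ncard = n → ∀ f : A ≃ B,
    ∃ h : X ≃ₜ X, ∀ a : A, h a = (f a : X)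

/-- `X` is countable dense homogeneous. -/
def CountableDenseHomogeneous (X : Type*) [TopologicalSpace X] : Prop :=
  ∀ A B : Set X, A.Countable → Dense A → B.Countable → Dense B →
    ∃ h : X ≃ₜ X, h '' A = B

/-- `X` is a 1-manifold: every point has an open neighbourhood homeomorphic to `ℝ`. -/
def OneManifold (X : Type*) [TopologicalSpace X] : Prop :=
  ∀ x : X, ∃ U : Set X, IsOpen U ∧ x ∈ U ∧ Nonempty (U ≃ₜ ℝ)

namespace ConeProof

lemma PosInf.eq_infty_iff {r : PosInf} : r = PosInf.infty ↔ (r : ℝ≥0∞) = ⊤ :=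
  ⟨fun h => by rw [h], fun h => Subtype.ext h⟩

lemma PosInf.ne_infty_iff {r : PosInf} : r ≠ PosInf.infty ↔ (r : ℝ≥0∞) ≠ ⊤ :=
  not_congr PosInf.eq_infty_iff

/-- The image under a chart of `N ×ˢ S`. -/
def im {Y X : Type*} (φ : Y × PosInf → X) (N : Set Y) (S : Set ℝ≥0∞) : Set X :=
  φ '' (N ×ˢ (Subtype.val ⁻¹' S) : Set (Y × PosInf))

lemma mem_im {Y X : Type*} {φ : Y × PosInf → X} {N : Set Y} {S : Set ℝ≥0∞} {x : X} :
    x ∈ im φ N S ↔ ∃ (n : Y) (r : PosInf), n ∈ N ∧ (r : ℝ≥0∞) ∈ S ∧ φ (n, r) = x := by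
  constructor
  · rintro ⟨⟨n, r⟩, ⟨hn, hr⟩, rfl⟩
    exact ⟨n, r, hn, hr, rfl⟩
  · rintro ⟨n, r, hn, hr, rfl⟩
    exact ⟨(n, r), ⟨hn, hr⟩, rfl⟩

lemma mem_im_of {Y X : Type*} {φ : Y × PosInf → X} {N : Set Y} {S : Set ℝ≥0∞}
    {n : Y} {r : PosInf} (hn : n ∈ N) (hr : (r : ℝ≥0∞) ∈ S) : φ (n, r) ∈ im φ N S :=
  mem_im.2 ⟨n, r, hn, hr, rfl⟩

lemma im_mono {Y X : Type*} {φ : Y × PosInf → X} {N N' : Set Y} {S S' : Set ℝ≥0∞}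
    (hN : N ⊆ N') (hS : S ⊆ S') : im φ N S ⊆ im φ N' S' :=
  image_mono (prod_mono hN (preimage_mono hS))

lemma im_union_left {Y X : Type*} (φ : Y × PosInf → X) (N N' : Set Y) (S : Set ℝ≥0∞) :
    im φ (N ∪ N') S = im φ N S ∪ im φ N' S := by
  rw [im, union_prod, image_union]; rfl

end ConeProof

open ConeProof

namespace IsConeChart

variable {Y X : Type*} [TopologicalSpace Y] [TopologicalSpace X]
  {φ : Y × PosInf → X} {U : Set X} {p : X}

variable (hc : IsConeChart φ U p)
include hc

lemma im_subset_target (N : Set Y) (S : Set ℝ≥0∞) : im φ N S ⊆ U := by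
  rintro x ⟨z, _, rfl⟩; exact hc.mapsTo z

lemma mem_target_diff {z : Y × PosInf} (hz : (z.2 : ℝ≥0∞) ≠ ⊤) : φ z ∈ U \ {p} := by
  rw [← hc.image_restrict]
  exact mem_image_of_mem _ (by simpa [Set.mem_setOf_eq, PosInf.ne_infty_iff] using hz)

lemma ne_vertex {z : Y × PosInf} (hz : (z.2 : ℝ≥0∞) ≠ ⊤) : φ z ≠ p :=
  (hc.mem_target_diff hz).2

lemma inj {y y' : Y} {r r' : PosInf} (hr : (r : ℝ≥0∞) ≠ ⊤) (hr' : (r' : ℝ≥0∞) ≠ ⊤)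
    (h : φ (y, r) = φ (y', r')) : y = y' ∧ r = r' := by
  have h1 : ((y, r) : Y × PosInf) ∈ {z : Y × PosInf | z.2 ≠ PosInf.infty} := by
    simpa [Set.mem_setOf_eq, PosInf.ne_infty_iff] using hr
  have h2 : ((y', r') : Y × PosInf) ∈ {z : Y × PosInf | z.2 ≠ PosInf.infty} := by
    simpa [Set.mem_setOf_eq, PosInf.ne_infty_iff] using hr'
  have := hc.isEmbedding_restrict.injective (a₁ := ⟨(y, r), h1⟩) (a₂ := ⟨(y', r'), h2⟩)
    (by simpa [Set.restrict] using h)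
  have h' : ((y, r) : Y × PosInf) = (y', r') := congrArg Subtype.val this
  exact ⟨congrArg Prod.fst h', congrArg Prod.snd h'⟩

/-- the vertex is in no finite-level image -/
lemma vertex_not_mem {N : Set Y} {S : Set ℝ≥0∞} (hS : ⊤ ∉ S) : p ∉ im φ N S := by
  rintro ⟨⟨n, r⟩, ⟨_, hr⟩, h⟩
  exact hc.ne_vertex (fun ht => hS (ht ▸ hr)) h

lemma not_mem_im {y : Y} {r : PosInf} {N : Set Y} {S : Set ℝ≥0∞}
    (hr : (r : ℝ≥0∞) ≠ ⊤) (hS : ⊤ ∉ S) (h : y ∉ N ∨ (r : ℝ≥0∞) ∉ S) :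
    φ (y, r) ∉ im φ N S := by
  rintro hmem
  rcases mem_im.1 hmem with ⟨n, r', hn, hr', heq⟩
  have hr'top : (r' : ℝ≥0∞) ≠ ⊤ := fun ht => hS (ht ▸ hr')
  obtain ⟨rfl, rfl⟩ := hc.inj hr'top hr heq
  rcases h with h | h
  exacts [h hn, h hr']

lemma isOpen_im [T1Space X] {N : Set Y} {S : Set ℝ≥0∞} (hN : IsOpen N) (hS : IsOpen S)
    (hStop : ⊤ ∉ S) : IsOpen (im φ N S) := by
  have hrange : Set.range ({z : Y × PosInf | z.2 ≠ PosInf.infty}.restrict φ) = U \ {p} := by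
    exact (Set.range_domRestrict φ _).trans hc.image_restrict
  have hoe : Topology.IsOpenEmbedding ({z : Y × PosInf | z.2 ≠ PosInf.infty}.restrict φ) := by
    rw [Topology.isOpenEmbedding_iff]
    exact ⟨hc.isEmbedding_restrict, hrange ▸ (hc.isOpen_target.sdiff isClosed_singleton)⟩
  have hG : IsOpen (N ×ˢ (Subtype.val ⁻¹' S) : Set (Y × PosInf)) :=
    hN.prod (hS.preimage continuous_subtype_val)
  have hsub : (N ×ˢ (Subtype.val ⁻¹' S) : Set (Y × PosInf)) ⊆
      {z : Y × PosInf | z.2 ≠ PosInf.infty} := by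
    rintro ⟨n, r⟩ ⟨_, hr⟩
    simp only [Set.mem_setOf_eq, PosInf.ne_infty_iff]
    exact fun ht => hStop (ht ▸ hr)
  have : im φ N S = ({z : Y × PosInf | z.2 ≠ PosInf.infty}.restrict φ) ''
      (Subtype.val ⁻¹' (N ×ˢ (Subtype.val ⁻¹' S))) := by
    rw [im]
    rw [show ({z : Y × PosInf | z.2 ≠ PosInf.infty}.restrict φ) = φ ∘ Subtype.val from rfl,
      Set.image_comp, Subtype.image_preimage_coe]
    rw [inter_eq_self_of_subset_right hsub]
  rw [this]
  exact hoe.isOpenMap _ (hG.preimage continuous_subtype_val)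

lemma isPreconnected_im {N : Set Y} {S : Set ℝ≥0∞} (hN : IsPreconnected N)
    (hS : IsPreconnected S) (hS0 : S ⊆ Ioi (0 : ℝ≥0∞)) : IsPreconnected (im φ N S) := by
  have h1 : IsPreconnected (Subtype.val ⁻¹' S : Set PosInf) := by
    rw [← Topology.IsInducing.subtypeVal.isPreconnected_image, Subtype.image_preimage_coe,
      inter_eq_self_of_subset_right hS0]
    exact hS
  exact (hN.prod h1).image _ (hc.continuous.continuousOn)

lemma disjoint_im {N N' : Set Y} {S S' : Set ℝ≥0∞} (hS : ⊤ ∉ S) (hS' : ⊤ ∉ S')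
    (h : (N ∩ N' = ∅) ∨ (S ∩ S' = ∅)) : im φ N S ∩ im φ N' S' = ∅ := by
  rw [eq_empty_iff_forall_notMem]
  rintro x ⟨hx1, hx2⟩
  rcases mem_im.1 hx1 with ⟨n, r, hn, hr, rfl⟩
  rcases mem_im.1 hx2 with ⟨n', r', hn', hr', heq⟩
  obtain ⟨rfl, rfl⟩ := hc.inj (fun ht => hS' (ht ▸ hr')) (fun ht => hS (ht ▸ hr)) heq
  rcases h with h | h
  · exact (eq_empty_iff_forall_notMem.1 h) n' ⟨hn, hn'⟩
  · exact (eq_empty_iff_forall_notMem.1 h) r' ⟨hr, hr'⟩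

lemma vertex_mem_im {N : Set Y} {S : Set ℝ≥0∞} (hN : N.Nonempty) (hS : ⊤ ∈ S) :
    p ∈ im φ N S := by
  obtain ⟨y, hy⟩ := hN
  exact mem_im.2 ⟨y, PosInf.infty, hy, hS, hc.map_infty y⟩

/-- `V t` minus the vertex. -/
lemma im_Ioi_diff_vertex (N : Set Y) (t : ℝ≥0∞) :
    im φ N (Ioi t) \ {p} = im φ N (Ioo t ⊤) := by
  ext x
  constructor
  · rintro ⟨hx, hxp⟩
    rcases mem_im.1 hx with ⟨n, r, hn, hr, rfl⟩
    have : (r : ℝ≥0∞) ≠ ⊤ := by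
      intro ht
      exact hxp (by rw [show r = PosInf.infty from Subtype.ext ht]; exact hc.map_infty n)
    exact mem_im_of hn ⟨hr, lt_top_iff_ne_top.2 this⟩
  · intro hx
    rcases mem_im.1 hx with ⟨n, r, hn, hr, rfl⟩
    exact ⟨mem_im_of hn hr.1, hc.ne_vertex hr.2.ne⟩

lemma im_subset_target_diff {N : Set Y} {S : Set ℝ≥0∞} (hS : ⊤ ∉ S) :
    im φ N S ⊆ U \ {p} := by
  rintro x hx
  rcases mem_im.1 hx with ⟨n, r, hn, hr, rfl⟩
  exact hc.mem_target_diff (fun ht => hS (ht ▸ hr))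

end IsConeChart
namespace IsConeChart

variable {Y X : Type*} [TopologicalSpace Y] [MetricSpace X]
  {φ : Y × PosInf → X} {U : Set X} {p : X}

variable (hc : IsConeChart φ U p)
include hc

lemma mem_im_univ_of_mem_target {x : X} (hx : x ∈ U) {t : ℝ≥0∞} (ht : t < ⊤) :
    x ∈ im φ univ (Ioi t) ∪ im φ univ (Iic t) := by
  by_cases hxp : x = p
  · subst hxp
    have : Nonempty Y := hc.nonempty_base
    exact Or.inl (hc.vertex_mem_im univ_nonempty ht)
  · have : x ∈ φ '' {z : Y × PosInf | z.2 ≠ PosInf.infty} := by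
      rw [hc.image_restrict]; exact ⟨hx, hxp⟩
    rcases this with ⟨z, hz, rfl⟩
    rcases lt_or_ge t (z.2 : ℝ≥0∞) with h | h
    · exact Or.inl ⟨z, ⟨trivial, h⟩, rfl⟩
    · exact Or.inr ⟨z, ⟨trivial, h⟩, rfl⟩

lemma isOpen_im_Ioi {t : ℝ≥0∞} (ht : t < ⊤) : IsOpen (im φ univ (Ioi t)) := by
  rw [isOpen_iff_mem_nhds]
  intro x hx
  rcases mem_im.1 hx with ⟨n, r, -, hr, rfl⟩
  by_cases hrtop : (r : ℝ≥0∞) = ⊤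
  · -- x is the vertex p
    have hxp : φ (n, r) = p := by
      rw [show r = PosInf.infty from Subtype.ext hrtop]; exact hc.map_infty n
    have hOC : ∃ O : Set X, IsOpen O ∧ p ∈ O ∧ O ∩ im φ univ (Iic t) = ∅ := by
      by_contra hcon
      push_neg at hcon
      have hpcl : p ∈ closure (im φ univ (Iic t)) := by
        rw [mem_closure_iff]
        intro o ho hpo
        exact hcon o ho hpo
      rcases mem_closure_iff_seq_limit.1 hpcl with ⟨xs, hxs, hlim⟩
      have hchoice : ∀ m : ℕ, ∃ z : Y × PosInf, (z.2 : ℝ≥0∞) ≤ t ∧ φ z = xs m := by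
        intro m
        rcases mem_im.1 (hxs m) with ⟨n', r', -, hr', h⟩
        exact ⟨(n', r'), hr', h⟩
      choose zs hzs hzseq using hchoice
      have hK : IsCompact (insert p (Set.range xs)) := hlim.isCompact_insert_range
      have hKU : insert p (Set.range xs) ⊆ U := by
        rintro u (rfl | ⟨m, rfl⟩)
        · exact hc.vertex_mem
        · rw [← hzseq m]; exact hc.mapsTo _
      have hP : IsCompact (φ ⁻¹' (insert p (Set.range xs))) := hc.proper _ hKU hK
      have hD : IsCompact ((φ ⁻¹' (insert p (Set.range xs))) ∩
          {z : Y × PosInf | (z.2 : ℝ≥0∞) ≤ t}) :=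
        hP.inter_right (isClosed_Iic.preimage (continuous_subtype_val.comp continuous_snd))
      have hDimg : IsClosed (φ '' ((φ ⁻¹' (insert p (Set.range xs))) ∩
          {z : Y × PosInf | (z.2 : ℝ≥0∞) ≤ t})) := (hD.image hc.continuous).isClosed
      have hmem : ∀ m, xs m ∈ φ '' ((φ ⁻¹' (insert p (Set.range xs))) ∩
          {z : Y × PosInf | (z.2 : ℝ≥0∞) ≤ t}) := by
        intro m
        exact ⟨zs m, ⟨by rw [Set.mem_preimage, hzseq m]; exact Or.inr ⟨m, rfl⟩, hzs m⟩, hzseq m⟩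
      have hpD : p ∈ φ '' ((φ ⁻¹' (insert p (Set.range xs))) ∩
          {z : Y × PosInf | (z.2 : ℝ≥0∞) ≤ t}) :=
        hDimg.mem_of_tendsto hlim (Filter.Eventually.of_forall hmem)
      rcases hpD with ⟨w, ⟨-, hw2⟩, hwp⟩
      exact hc.ne_vertex (fun htop => (ht.not_ge (htop ▸ hw2)).elim) hwp
    rcases hOC with ⟨O, hO, hpO, hOC⟩
    rw [hxp]
    refine Filter.mem_of_superset ((hO.inter hc.isOpen_target).mem_nhds ⟨hpO, hc.vertex_mem⟩) ?_
    rintro u ⟨huO, huU⟩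
    rcases hc.mem_im_univ_of_mem_target huU ht with h | h
    · exact h
    · exact (eq_empty_iff_forall_notMem.1 hOC u ⟨huO, h⟩).elim
  · -- x is not the vertex
    refine Filter.mem_of_superset
      (((hc.isOpen_im isOpen_univ isOpen_Ioo (by simp)
        : IsOpen (im φ univ (Ioo t ⊤)))).mem_nhds ?_)
      (im_mono Subset.rfl Ioo_subset_Ioi_self)
    exact mem_im_of trivial ⟨hr, lt_top_iff_ne_top.2 hrtop⟩

lemma exists_im_subset {O : Set X} (hO : IsOpen O) (hp : p ∈ O) :
    ∃ t : ℝ≥0∞, t < ⊤ ∧ im φ univ (Ioi t) ⊆ O := by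
  by_contra hcon
  push_neg at hcon
  have h : ∀ m : ℕ, ∃ z : Y × PosInf, (m : ℝ≥0∞) < (z.2 : ℝ≥0∞) ∧ φ z ∉ O := by
    intro m
    rcases not_subset.1 (hcon m (ENNReal.natCast_lt_top m)) with ⟨x, hx, hxO⟩
    rcases mem_im.1 hx with ⟨n, r, -, hr, rfl⟩
    exact ⟨(n, r), hr, hxO⟩
  choose zs hzs hzsO using h
  haveI := hc.compact_base
  have h2 : IsCompact (Subtype.val ⁻¹' Ici (1 : ℝ≥0∞) : Set PosInf) := by
    rw [Topology.IsEmbedding.subtypeVal.isCompact_iff, Subtype.image_preimage_coe]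
    have heq : Ioi (0:ℝ≥0∞) ∩ Ici 1 = Ici 1 :=
      inter_eq_self_of_subset_right (fun x hx => mem_Ioi.2 (lt_of_lt_of_le zero_lt_one hx))
    rw [heq]
    exact isClosed_Ici.isCompact
  have hK : IsCompact (im φ univ (Ici (1:ℝ≥0∞))) :=
    (isCompact_univ.prod h2).image hc.continuous
  have hC : IsCompact (im φ univ (Ici (1:ℝ≥0∞)) \ O) := hK.diff hO
  have hCU : im φ univ (Ici (1:ℝ≥0∞)) \ O ⊆ U := diff_subset.trans (hc.im_subset_target _ _)
  have hP : IsCompact (φ ⁻¹' (im φ univ (Ici (1:ℝ≥0∞)) \ O)) := hc.proper _ hCU hC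
  set P := φ ⁻¹' (im φ univ (Ici (1:ℝ≥0∞)) \ O) with hPdef
  have hR : IsCompact ((fun z : Y × PosInf => (z.2 : ℝ≥0∞)) '' P) :=
    hP.image (continuous_subtype_val.comp continuous_snd)
  have hzsP : ∀ n : ℕ, zs (n + 1) ∈ P := by
    intro n
    rw [hPdef, Set.mem_preimage]
    refine ⟨⟨zs (n+1), ⟨trivial, ?_⟩, rfl⟩, hzsO (n+1)⟩
    have h1 : (1 : ℝ≥0∞) ≤ ((n + 1 : ℕ) : ℝ≥0∞) := by exact_mod_cast Nat.one_le_iff_ne_zero.2 (Nat.succ_ne_zero n)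
    exact le_of_lt (lt_of_le_of_lt h1 (hzs (n+1)))
  have htopcl : (⊤:ℝ≥0∞) ∈ closure ((fun z : Y × PosInf => (z.2 : ℝ≥0∞)) '' P) := by
    rw [mem_closure_iff]
    intro o ho hto
    obtain ⟨c, hclt, hIoi⟩ := ENNReal.nhds_top_basis.mem_iff.1 (ho.mem_nhds hto)
    obtain ⟨n, hn⟩ := ENNReal.exists_nat_gt hclt.ne
    refine ⟨((zs (n+1)).2 : ℝ≥0∞), hIoi ?_, ⟨zs (n+1), hzsP n, rfl⟩⟩
    have hstep : (n : ℝ≥0∞) < ((n + 1 : ℕ) : ℝ≥0∞) := by exact_mod_cast Nat.lt_succ_self n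
    exact lt_trans hn (lt_trans hstep (hzs (n+1)))
  rw [hR.isClosed.closure_eq] at htopcl
  rcases htopcl with ⟨w, hwP, hwtop⟩
  have hwp : φ w = p := by
    rw [← Prod.mk.eta (p := w), show w.2 = PosInf.infty from Subtype.ext hwtop, hc.map_infty]
  rw [Set.mem_preimage, hwp] at hwP
  exact hwP.2 hp

lemma eventually_gt_mem {O : Set X} (hO : O ∈ 𝓝 p) (y : Y) :
    ∃ c : ℝ≥0∞, c < ⊤ ∧ ∀ r : PosInf, c < (r : ℝ≥0∞) → φ (y, r) ∈ O := by
  have hf : Continuous (fun r : PosInf => φ (y, r)) := hc.continuous.comp (Continuous.prodMk_right y)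
  have hmem : (fun r : PosInf => φ (y, r)) ⁻¹' O ∈ 𝓝 (PosInf.infty) := by
    apply hf.continuousAt.preimage_mem_nhds
    rwa [hc.map_infty y]
  rw [nhds_subtype_eq_comap, Filter.mem_comap] at hmem
  rcases hmem with ⟨s, hs, hsub⟩
  obtain ⟨c, hclt, hIoi⟩ := ENNReal.nhds_top_basis.mem_iff.1 hs
  exact ⟨c, hclt, fun r hr => hsub (by exact hIoi hr)⟩

lemma vertex_mem_closure_im {N : Set Y} {y : Y} (hy : y ∈ N) {t : ℝ≥0∞} (ht : t < ⊤) :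
    p ∈ closure (im φ N (Ioo t ⊤)) := by
  rw [mem_closure_iff]
  intro o ho hpo
  obtain ⟨c, hclt, hmem⟩ := hc.eventually_gt_mem (ho.mem_nhds hpo) y
  obtain ⟨r, hr1, hr2⟩ := exists_between (max_lt hclt ht)
  have hrr0 : (0:ℝ≥0∞) < r := lt_of_le_of_lt zero_le hr1
  refine ⟨φ (y, ⟨r, hrr0⟩), hmem _ (lt_of_le_of_lt (le_max_left _ _) hr1), ?_⟩
  exact mem_im_of hy ⟨lt_of_le_of_lt (le_max_right _ _) hr1, hr2⟩

lemma joinedIn_im_Ioi {t : ℝ≥0∞} (ht : t < ⊤) {x : X} (hx : x ∈ im φ univ (Ioi t)) :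
    JoinedIn (im φ univ (Ioi t)) x p := by
  rcases mem_im.1 hx with ⟨y, r, -, hr, rfl⟩
  by_cases hrtop : (r : ℝ≥0∞) = ⊤
  · have hxp : φ (y, r) = p := by
      rw [show r = PosInf.infty from Subtype.ext hrtop]; exact hc.map_infty y
    rw [hxp]
    exact JoinedIn.refl (hxp ▸ hx)
  · set s : ℝ≥0∞ := (r : ℝ≥0∞) with hsdef
    have hs0 : s ≠ 0 := (r.2 : (0:ℝ≥0∞) < s).ne'
    have hstop : s ≠ ⊤ := hrtop
    have hpos : ∀ u : ℝ, 0 < s * (ENNReal.ofReal (1 - u))⁻¹ :=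
      fun u => ENNReal.mul_pos hs0 (ENNReal.inv_ne_zero.2 ENNReal.ofReal_ne_top)
    have hγcont : Continuous (fun u : unitInterval =>
        φ (y, ⟨s * (ENNReal.ofReal (1 - (u : ℝ)))⁻¹, hpos _⟩)) := by
      apply hc.continuous.comp
      apply (Continuous.prodMk_right y).comp
      apply Continuous.subtype_mk
      exact (ENNReal.continuous_const_mul hstop).comp
        (ENNReal.continuous_ofReal.comp ((continuous_const.sub continuous_subtype_val))).inv
    have hmemim : ∀ u : unitInterval,
        φ (y, ⟨s * (ENNReal.ofReal (1 - (u : ℝ)))⁻¹, hpos _⟩) ∈ im φ univ (Ioi t) := by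
      intro u
      refine mem_im_of trivial ?_
      have hle : ENNReal.ofReal (1 - (u : ℝ)) ≤ 1 := by
        calc ENNReal.ofReal (1 - (u : ℝ)) ≤ ENNReal.ofReal 1 :=
              ENNReal.ofReal_le_ofReal (by linarith [u.2.1])
          _ = 1 := ENNReal.ofReal_one
      have h1 : (1:ℝ≥0∞) ≤ (ENNReal.ofReal (1 - (u : ℝ)))⁻¹ := by
        simpa using ENNReal.inv_le_inv.2 hle
      calc t < s := lt_of_lt_of_le hr le_rfl
        _ = s * 1 := (mul_one s).symm
        _ ≤ s * (ENNReal.ofReal (1 - (u : ℝ)))⁻¹ := mul_le_mul_right h1 s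
    refine ⟨⟨⟨fun u => φ (y, ⟨s * (ENNReal.ofReal (1 - (u : ℝ)))⁻¹, hpos _⟩), hγcont⟩, ?_, ?_⟩, hmemim⟩
    · show φ (y, ⟨s * (ENNReal.ofReal (1 - ((0: unitInterval) : ℝ)))⁻¹, hpos _⟩) = φ (y, r)
      congr 1
      refine Prod.ext rfl (Subtype.ext ?_)
      show s * (ENNReal.ofReal (1 - ((0: unitInterval) : ℝ)))⁻¹ = s
      norm_num
    · show φ (y, ⟨s * (ENNReal.ofReal (1 - ((1: unitInterval) : ℝ)))⁻¹, hpos _⟩) = p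
      have : s * (ENNReal.ofReal (1 - ((1: unitInterval) : ℝ)))⁻¹ = ⊤ := by
        norm_num [ENNReal.mul_top hs0]
      rw [show (⟨s * (ENNReal.ofReal (1 - ((1: unitInterval) : ℝ)))⁻¹, hpos _⟩ : PosInf)
        = PosInf.infty from Subtype.ext this]
      exact hc.map_infty y

lemma isPathConnected_im_Ioi {t : ℝ≥0∞} (ht : t < ⊤) : IsPathConnected (im φ univ (Ioi t)) := by
  have : Nonempty Y := hc.nonempty_base
  refine ⟨p, hc.vertex_mem_im univ_nonempty ht, fun {x} hx => ?_⟩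
  exact (hc.joinedIn_im_Ioi ht hx).symm

lemma comp_homeomorph (h : X ≃ₜ X) : IsConeChart (h ∘ φ) (h '' U) (h p) where
  nonempty_base := hc.nonempty_base
  compact_base := hc.compact_base
  metrizable_base := hc.metrizable_base
  isOpen_target := h.isOpenMap _ hc.isOpen_target
  continuous := h.continuous.comp hc.continuous
  mapsTo := fun z => mem_image_of_mem h (hc.mapsTo z)
  proper := by
    intro K hK hKc
    have : (h ∘ φ) ⁻¹' K = φ ⁻¹' (h ⁻¹' K) := rfl
    rw [this]
    apply hc.proper
    · intro z hz
      have : h z ∈ h '' U := hK hz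
      rcases this with ⟨u, hu, huz⟩
      rwa [← h.injective huz]
    · exact h.isCompact_preimage.2 hKc
  vertex_mem := mem_image_of_mem h hc.vertex_mem
  map_infty := fun y => congrArg h (hc.map_infty y)
  isEmbedding_restrict := by
    have : {z : Y × PosInf | z.2 ≠ PosInf.infty}.restrict (h ∘ φ)
        = h ∘ ({z : Y × PosInf | z.2 ≠ PosInf.infty}.restrict φ) := rfl
    rw [this]
    exact h.isEmbedding.comp hc.isEmbedding_restrict
  image_restrict := by
    rw [Set.image_comp, hc.image_restrict, Set.image_diff h.injective, Set.image_singleton]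

end IsConeChart
namespace ConeProof

variable {Y X : Type*} [TopologicalSpace Y] [MetricSpace X]

/-- If the base of a cone chart structure admits a separation, then every point of the base
is isolated. -/
lemma isolated_of_split
    {φ : Y × PosInf → X} {U : Set X} {p : X} (hc : IsConeChart φ U p)
    (hchart : ∀ q : X, ∃ (ψ : Y × PosInf → X) (W : Set X), IsConeChart ψ W q)
    {Y₁ Y₂ : Set Y} (h1 : IsOpen Y₁) (h2 : IsOpen Y₂) (hne1 : Y₁.Nonempty) (hne2 : Y₂.Nonempty)
    (hdisj : Y₁ ∩ Y₂ = ∅) (hcov : Y₁ ∪ Y₂ = univ) (y : Y) : IsOpen ({y} : Set Y) := by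
  by_contra hyo
  haveI : Nonempty Y := hc.nonempty_base
  set one : PosInf := ⟨1, by norm_num⟩ with hone_def
  set q : X := φ (y, one) with hq_def
  have honene : (one : ℝ≥0∞) ≠ ⊤ := by rw [hone_def]; norm_num
  have hqUp : q ∈ U \ {p} := hc.mem_target_diff honene
  obtain ⟨ψ, W, hψ⟩ := hchart q
  obtain ⟨t, htlt, hVsub⟩ := hψ.exists_im_subset (hc.isOpen_target.sdiff isClosed_singleton) hqUp
  set V : Set X := im ψ univ (Ioi t) with hV_def
  have hVopen : IsOpen V := hψ.isOpen_im_Ioi htlt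
  have hqV : q ∈ V := hψ.vertex_mem_im univ_nonempty htlt
  set A : Set X := im ψ Y₁ (Ioo t ⊤) with hA_def
  set B : Set X := im ψ Y₂ (Ioo t ⊤) with hB_def
  have hAopen : IsOpen A := hψ.isOpen_im h1 isOpen_Ioo (by simp)
  have hBopen : IsOpen B := hψ.isOpen_im h2 isOpen_Ioo (by simp)
  have hAB : A ∩ B = ∅ := hψ.disjoint_im (by simp) (by simp) (Or.inl hdisj)
  have hABcov : A ∪ B = V \ {q} := by
    rw [hA_def, hB_def, ← im_union_left, hcov, hV_def, hψ.im_Ioi_diff_vertex]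
  have hqA : q ∈ closure A := hψ.vertex_mem_closure_im hne1.choose_spec htlt
  have hqB : q ∈ closure B := hψ.vertex_mem_closure_im hne2.choose_spec htlt
  -- a product box inside V
  obtain ⟨N₂, a₂, b₂, hN₂open, hyN₂, ha₂, hb₂, hbox⟩ :
      ∃ (N₂ : Set Y) (a₂ b₂ : ℝ≥0∞), IsOpen N₂ ∧ y ∈ N₂ ∧ a₂ < 1 ∧ 1 < b₂ ∧
        im φ N₂ (Ioo a₂ b₂) ⊆ V := by
    have hnh : φ ⁻¹' V ∈ 𝓝 (y, one) :=
      hc.continuous.continuousAt.preimage_mem_nhds (hVopen.mem_nhds hqV)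
    rw [mem_nhds_prod_iff] at hnh
    obtain ⟨N, hN, M, hM, hsub⟩ := hnh
    obtain ⟨N₂, hN₂sub, hN₂open, hyN₂⟩ := mem_nhds_iff.1 hN
    rw [nhds_subtype_eq_comap] at hM
    obtain ⟨s, hs, hssub⟩ := Filter.mem_comap.1 hM
    obtain ⟨⟨a₂, b₂⟩, ⟨ha₂, hb₂⟩, hIoo⟩ :=
      (nhds_basis_Ioo' ⟨0, zero_lt_one⟩ ⟨⊤, by norm_num⟩).mem_iff.1 hs
    refine ⟨N₂, a₂, b₂, hN₂open, hyN₂, ha₂, hb₂, ?_⟩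
    intro x hx
    rcases mem_im.1 hx with ⟨n, r, hn, hr, rfl⟩
    exact hsub (Set.mk_mem_prod (hN₂sub hn) (hssub (hIoo hr)))
  set R : Set ℝ≥0∞ := Ioo a₂ b₂ with hR_def
  have hR0 : R ⊆ Ioi 0 := fun x hx => lt_of_le_of_lt zero_le hx.1
  have hRtop : ⊤ ∉ R := fun h => not_top_lt h.2
  have hRne_top : ∀ s ∈ R, s ≠ ⊤ := fun s hs => (lt_of_lt_of_le hs.2 le_top).ne
  have hone_mem : (1:ℝ≥0∞) ∈ R := ⟨ha₂, hb₂⟩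
  have hyV : ∀ (r : PosInf), (r : ℝ≥0∞) ∈ R → φ (y, r) ∈ V :=
    fun r hr => hbox (mem_im_of hyN₂ hr)
  have hney : ∀ (r : PosInf), (r : ℝ≥0∞) ≠ ⊤ → (r : ℝ≥0∞) ≠ 1 → φ (y, r) ≠ q := by
    intro r hrt hr1 h
    exact hr1 (congrArg Subtype.val (hc.inj hrt honene h).2)
  obtain ⟨sm, hsm1, hsm2⟩ := exists_between ha₂
  obtain ⟨sp, hsp1, hsp2⟩ := exists_between hb₂
  have hsm0 : (0:ℝ≥0∞) < sm := lt_of_le_of_lt zero_le hsm1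
  have hsp0 : (0:ℝ≥0∞) < sp := lt_trans zero_lt_one hsp1
  have hsmR : sm ∈ R := ⟨hsm1, lt_trans hsm2 hb₂⟩
  have hspR : sp ∈ R := ⟨lt_trans ha₂ hsp1, hsp2⟩
  -- columns over points of N₂ other than y live in V \ {q}
  have hcolV : ∀ n ∈ N₂, n ≠ y → im φ {n} R ⊆ V \ {q} := by
    intro n hn hny x hx
    rcases mem_im.1 hx with ⟨n', r', hn', hr', rfl⟩
    have hn'' : n' = n := hn'
    subst hn''
    refine ⟨hbox (im_mono (singleton_subset_iff.2 hn) Subset.rfl hx), ?_⟩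
    intro hxq
    exact hny ((hc.inj (hRne_top _ hr') honene hxq).1)
  have hcolAB : ∀ n ∈ N₂, n ≠ y → im φ {n} R ⊆ A ∨ im φ {n} R ⊆ B := by
    intro n hn hny
    refine IsPreconnected.subset_or_subset hAopen hBopen
      (Set.disjoint_iff_inter_eq_empty.2 hAB)
      ((hcolV n hn hny).trans hABcov.symm.subset)
      (hc.isPreconnected_im isPreconnected_singleton isPreconnected_Ioo hR0)
  -- passing to closures along the y-column
  have hclos : ∀ (T : Set Y) (B' : Set X), (∀ n ∈ T, im φ {n} R ⊆ B') → y ∈ closure T →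
      ∀ (s : ℝ≥0∞) (hs0 : 0 < s), s ∈ R → φ (y, ⟨s, hs0⟩) ∈ closure B' := by
    intro T B' hTB hyT s hs0 hsR
    have hmap : Continuous (fun n : Y => φ (n, ⟨s, hs0⟩)) :=
      hc.continuous.comp (continuous_id.prodMk continuous_const)
    have himg : (fun n : Y => φ (n, ⟨s, hs0⟩)) '' T ⊆ B' := by
      rintro x ⟨n, hn, rfl⟩
      exact hTB n hn (mem_im_of rfl hsR)
    exact closure_mono himg
      (image_closure_subset_closure_image hmap (mem_image_of_mem _ hyT))
  have hBmem : ∀ (A' B' : Set X), IsOpen A' → A' ∩ B' = ∅ → A' ∪ B' = V \ {q} →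
      ∀ x, x ∈ closure B' → x ∈ V \ {q} → x ∈ B' := by
    intro A' B' hA' hdisj' hcov' x hxcl hxV
    have hx : x ∈ A' ∪ B' := by rw [hcov']; exact hxV
    rcases hx with h | h
    · rcases mem_closure_iff.1 hxcl A' hA' h with ⟨u, huA, huB⟩
      exact ((eq_empty_iff_forall_notMem.1 hdisj' u ⟨huA, huB⟩)).elim
    · exact h
  -- main contradiction engine
  have aux : ∀ (A' B' : Set X), IsOpen A' → IsOpen B' → A' ∩ B' = ∅ → A' ∪ B' = V \ {q} →
      (∀ n ∈ N₂, n ≠ y → im φ {n} R ⊆ A' ∨ im φ {n} R ⊆ B') →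
      q ∈ closure A' →
      y ∈ closure {n | n ∈ N₂ ∧ n ≠ y ∧ im φ {n} R ⊆ B'} → False := by
    intro A' B' hA' hB' hd' hc' hcolAB' hqA' hySB'
    have hymem : ∀ (s : ℝ≥0∞) (hs0 : 0 < s), s ∈ R → s ≠ 1 → φ (y, ⟨s, hs0⟩) ∈ B' := by
      intro s hs0 hsR hs1
      exact hBmem A' B' hA' hd' hc' _
        (hclos _ _ (fun n hn => hn.2.2) hySB' s hs0 hsR)
        ⟨hyV ⟨s, hs0⟩ hsR, hney ⟨s, hs0⟩ (hRne_top s hsR) hs1⟩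
    by_cases hex : ∃ (s : ℝ≥0∞) (hs0 : 0 < s), s ∈ R ∧ s ≠ 1 ∧ φ (y, ⟨s, hs0⟩) ∈ A'
    · obtain ⟨s, hs0, hsR, hs1, hsA⟩ := hex
      have hseg : ∀ (s' : ℝ≥0∞) (hs'0 : 0 < s'),
          Icc (min s s') (max s s') ⊆ R → (1:ℝ≥0∞) ∉ Icc (min s s') (max s s') →
          φ (y, ⟨s', hs'0⟩) ∈ B' → False := by
        intro s' hs'0 hIccR hIcc1 hB'mem
        have hLsub : im φ {y} (Icc (min s s') (max s s')) ⊆ V \ {q} := by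
          intro x hx
          rcases mem_im.1 hx with ⟨n', r', hn', hr', rfl⟩
          have hn'' : n' = y := hn'
          subst hn''
          exact ⟨hyV r' (hIccR hr'),
            hney r' (hRne_top _ (hIccR hr')) (fun h1 => hIcc1 (h1 ▸ hr'))⟩
        have hLpre : IsPreconnected (im φ {y} (Icc (min s s') (max s s'))) :=
          hc.isPreconnected_im isPreconnected_singleton isPreconnected_Icc
            (hIccR.trans hR0)
        rcases hLpre.subset_or_subset hA' hB' (Set.disjoint_iff_inter_eq_empty.2 hd')
            (hLsub.trans hc'.symm.subset) with hLA | hLB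
        · exact (eq_empty_iff_forall_notMem.1 hd' _
            ⟨hLA (mem_im_of rfl ⟨min_le_right _ _, le_max_right _ _⟩), hB'mem⟩)
        · exact (eq_empty_iff_forall_notMem.1 hd' _
            ⟨hsA, hLB (mem_im_of rfl ⟨min_le_left _ _, le_max_left _ _⟩)⟩)
      rcases lt_or_gt_of_ne hs1 with hlt | hgt
      · refine hseg sm hsm0 ?_ ?_ (hymem sm hsm0 hsmR hsm2.ne)
        · intro x hx
          exact ⟨lt_of_lt_of_le (lt_min hsR.1 hsm1) hx.1,
            lt_of_le_of_lt hx.2 (max_lt hsR.2 hsmR.2)⟩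
        · intro hx
          exact absurd hx.2 (not_le.2 (max_lt hlt hsm2))
      · refine hseg sp hsp0 ?_ ?_ (hymem sp hsp0 hspR hsp1.ne')
        · intro x hx
          exact ⟨lt_of_lt_of_le (lt_min hsR.1 hspR.1) hx.1,
            lt_of_le_of_lt hx.2 (max_lt hsR.2 hspR.2)⟩
        · intro hx
          exact absurd hx.1 (not_le.2 (lt_min hgt hsp1))
    · push_neg at hex
      have hyT : y ∈ closure {n | n ∈ N₂ ∧ n ≠ y ∧ im φ {n} R ⊆ A'} := by
        rw [mem_closure_iff]
        intro o ho hyo'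
        have hbox2 : IsOpen (im φ (o ∩ N₂) R) :=
          hc.isOpen_im (ho.inter hN₂open) isOpen_Ioo hRtop
        have hqbox : q ∈ im φ (o ∩ N₂) R := mem_im_of ⟨hyo', hyN₂⟩ hone_mem
        rcases mem_closure_iff.1 hqA' _ hbox2 hqbox with ⟨x, hxbox, hxA'⟩
        rcases mem_im.1 hxbox with ⟨n, r, ⟨hno, hnN⟩, hrR, rfl⟩
        by_cases hny : n = y
        · subst hny
          have hne1' : (r : ℝ≥0∞) ≠ 1 := by
            intro hr1
            have hxq : φ (n, r) = q := by
              rw [hq_def]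
              exact congrArg φ (Prod.ext rfl (Subtype.ext hr1))
            have hA'V : A' ⊆ V \ {q} := hc' ▸ subset_union_left
            exact (hA'V hxA').2 hxq
          exact (hex (r : ℝ≥0∞) r.2 hrR hne1' hxA').elim
        · refine ⟨n, hno, hnN, hny, ?_⟩
          rcases hcolAB' n hnN hny with h | h
          · exact h
          · exact ((eq_empty_iff_forall_notMem.1 hd' _
              ⟨hxA', h (mem_im_of rfl hrR)⟩)).elim
      have hcl1 : φ (y, ⟨sp, hsp0⟩) ∈ closure A' :=
        hclos _ _ (fun n hn => hn.2.2) hyT sp hsp0 hspR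
      have hcl2 : φ (y, ⟨sp, hsp0⟩) ∈ B' := hymem sp hsp0 hspR hsp1.ne'
      rcases mem_closure_iff.1 hcl1 B' hB' hcl2 with ⟨u, huB, huA⟩
      exact (eq_empty_iff_forall_notMem.1 hd' u ⟨huA, huB⟩)
  -- conclude
  have hy_cl : y ∈ closure (N₂ \ {y}) := by
    rw [mem_closure_iff]
    intro o ho hyo'
    by_cases hsing : o ∩ N₂ ⊆ {y}
    · apply absurd _ hyo
      have heq : o ∩ N₂ = {y} := subset_antisymm hsing (singleton_subset_iff.2 ⟨hyo', hyN₂⟩)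
      rw [← heq]
      exact ho.inter hN₂open
    · rcases not_subset.1 hsing with ⟨n, hn, hny⟩
      exact ⟨n, hn.1, hn.2, hny⟩
  have hsubT : N₂ \ {y} ⊆ {n | n ∈ N₂ ∧ n ≠ y ∧ im φ {n} R ⊆ A} ∪
      {n | n ∈ N₂ ∧ n ≠ y ∧ im φ {n} R ⊆ B} := by
    rintro n ⟨hnN, hny⟩
    have hny' : n ≠ y := hny
    rcases hcolAB n hnN hny' with h | h
    · exact Or.inl ⟨hnN, hny', h⟩
    · exact Or.inr ⟨hnN, hny', h⟩
  have hcases := closure_mono hsubT hy_cl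
  rw [closure_union] at hcases
  rcases hcases with h | h
  · exact aux B A hBopen hAopen (by rw [inter_comm]; exact hAB)
      (by rw [union_comm]; exact hABcov)
      (fun n hn hny => (hcolAB n hn hny).symm) hqB h
  · exact aux A B hAopen hBopen hAB hABcov hcolAB hqA h

end ConeProof
namespace ConeProof

variable {Y X : Type*} [TopologicalSpace Y] [MetricSpace X]

lemma ordarg_gt (c : ℝ≥0∞) {R R' : Set ℝ≥0∞} (hR : R ⊆ Ioi c) (hR' : R' ⊆ Ioi c)
    (hoR : OrdConnected R) (hoR' : OrdConnected R') (hdisj : R ∩ R' = ∅)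
    (hne : R.Nonempty) (hne' : R'.Nonempty) (hcl : c ∈ closure R) (hcl' : c ∈ closure R') :
    False := by
  obtain ⟨r, hr⟩ := hne
  obtain ⟨r', hr'⟩ := hne'
  rcases le_total r r' with hle | hle
  · obtain ⟨u, hur, huR'⟩ := mem_closure_iff.1 hcl' (Iio r) isOpen_Iio (hR hr)
    have : r ∈ R' := hoR'.out huR' hr' ⟨le_of_lt hur, hle⟩
    exact eq_empty_iff_forall_notMem.1 hdisj r ⟨hr, this⟩
  · obtain ⟨u, hur, huR⟩ := mem_closure_iff.1 hcl (Iio r') isOpen_Iio (hR' hr')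
    have : r' ∈ R := hoR.out huR hr ⟨le_of_lt hur, hle⟩
    exact eq_empty_iff_forall_notMem.1 hdisj r' ⟨this, hr'⟩

lemma ordarg_lt (c : ℝ≥0∞) {R R' : Set ℝ≥0∞} (hR : R ⊆ Iio c) (hR' : R' ⊆ Iio c)
    (hoR : OrdConnected R) (hoR' : OrdConnected R') (hdisj : R ∩ R' = ∅)
    (hne : R.Nonempty) (hne' : R'.Nonempty) (hcl : c ∈ closure R) (hcl' : c ∈ closure R') :
    False := by
  obtain ⟨r, hr⟩ := hne
  obtain ⟨r', hr'⟩ := hne'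
  rcases le_total r r' with hle | hle
  · obtain ⟨u, hur, huR⟩ := mem_closure_iff.1 hcl (Ioi r') isOpen_Ioi (hR' hr')
    have : r' ∈ R := hoR.out hr huR ⟨hle, le_of_lt hur⟩
    exact eq_empty_iff_forall_notMem.1 hdisj r' ⟨this, hr'⟩
  · obtain ⟨u, hur, huR'⟩ := mem_closure_iff.1 hcl' (Ioi r) isOpen_Ioi (hR hr)
    have : r ∈ R' := hoR'.out hr' huR' ⟨hle, le_of_lt hur⟩
    exact eq_empty_iff_forall_notMem.1 hdisj r ⟨hr, this⟩

lemma not_three_isolated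
    {φ : Y × PosInf → X} {U : Set X} {p : X} (hc : IsConeChart φ U p)
    (hchart : ∀ q : X, ∃ (ψ : Y × PosInf → X) (W : Set X), IsConeChart ψ W q)
    (hdiscrete : ∀ y : Y, IsOpen ({y} : Set Y))
    {η₁ η₂ η₃ : Y} (h12 : η₁ ≠ η₂) (h13 : η₁ ≠ η₃) (h23 : η₂ ≠ η₃) : False := by
  classical
  haveI : Nonempty Y := hc.nonempty_base
  set one : PosInf := ⟨1, by norm_num⟩ with hone_def
  have honene : (one : ℝ≥0∞) ≠ ⊤ := by rw [hone_def]; norm_num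
  set q : X := φ (η₁, one) with hq_def
  have hqUp : q ∈ U \ {p} := hc.mem_target_diff honene
  -- the coordinate function
  set E : {z : Y × PosInf | z.2 ≠ PosInf.infty} → X :=
    {z : Y × PosInf | z.2 ≠ PosInf.infty}.restrict φ with hE_def
  have hE : Topology.IsEmbedding E := hc.isEmbedding_restrict
  have hrangeE : Set.range E = U \ {p} := by rw [hE_def]; exact (Set.range_domRestrict φ _).trans hc.image_restrict
  set Hom : _ ≃ₜ Set.range E := Topology.IsEmbedding.toHomeomorph (f := E) hE with hHom_def
  set f : X → ℝ≥0∞ :=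
    fun x => if hx : x ∈ Set.range E then ((Hom.symm ⟨x, hx⟩).val.2 : ℝ≥0∞) else 0 with hf_def
  have hfval : ∀ (n : Y) (r : PosInf), (r : ℝ≥0∞) ≠ ⊤ → f (φ (n, r)) = (r : ℝ≥0∞) := by
    intro n r hr
    have hz : ((n, r) : Y × PosInf) ∈ {z : Y × PosInf | z.2 ≠ PosInf.infty} := by
      simpa [Set.mem_setOf_eq, PosInf.ne_infty_iff] using hr
    have hmem : φ (n, r) ∈ Set.range E := ⟨⟨(n, r), hz⟩, rfl⟩
    have hsymm : Hom.symm ⟨φ (n, r), hmem⟩ = ⟨(n, r), hz⟩ := by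
      have heqH : Hom ⟨(n, r), hz⟩ = ⟨φ (n, r), hmem⟩ := Subtype.ext rfl
      rw [← heqH, Homeomorph.symm_apply_apply]
    rw [hf_def]
    simp only [dif_pos hmem, hsymm]
  have hfcont : ContinuousOn f (U \ {p}) := by
    rw [← hrangeE, continuousOn_iff_continuous_restrict]
    have heq : (Set.range E).domRestrict f =
        fun x : Set.range E => ((Hom.symm x).val.2 : ℝ≥0∞) := by
      funext x
      simp only [Set.domRestrict_apply, hf_def, dif_pos x.2]
    rw [heq]
    exact continuous_subtype_val.comp
      (continuous_snd.comp (continuous_subtype_val.comp Hom.symm.continuous))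
  -- ambient interval
  obtain ⟨a, ha0, ha1⟩ := exists_between (zero_lt_one (α := ℝ≥0∞))
  obtain ⟨b, hb1, hbtop⟩ := exists_between (ENNReal.one_lt_top)
  have habtop : ⊤ ∉ Ioo a b := fun h => not_top_lt h.2
  set S : Set X := im φ {η₁} (Ioo a b) with hS_def
  have hSopen : IsOpen S := hc.isOpen_im (hdiscrete η₁) isOpen_Ioo habtop
  have hqS : q ∈ S := mem_im_of rfl ⟨ha1, hb1⟩
  have hSUp : S ⊆ U \ {p} := hc.im_subset_target_diff habtop
  obtain ⟨ψ, W, hψ⟩ := hchart q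
  obtain ⟨t, htlt, hVsub⟩ := hψ.exists_im_subset hSopen hqS
  set V : Set X := im ψ univ (Ioi t) with hV_def
  set T : Y → Set X := fun η => im ψ {η} (Ioo t ⊤) with hT_def
  have hIoo0 : Ioo t ⊤ ⊆ Ioi (0 : ℝ≥0∞) := fun x hx => lt_of_le_of_lt zero_le hx.1
  have hTne : ∀ η, (T η).Nonempty := by
    intro η
    obtain ⟨r, hr1, hr2⟩ := exists_between htlt
    exact ⟨ψ (η, ⟨r, lt_of_le_of_lt zero_le hr1⟩), mem_im_of rfl ⟨hr1, hr2⟩⟩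
  have hTsub : ∀ η, T η ⊆ V \ {q} := by
    intro η
    rw [hV_def, hψ.im_Ioi_diff_vertex]
    exact im_mono (subset_univ _) Subset.rfl
  have hTdisj : ∀ η η', η ≠ η' → T η ∩ T η' = ∅ := by
    intro η η' hne
    refine hψ.disjoint_im (fun h => not_top_lt h.2) (fun h => not_top_lt h.2) (Or.inl ?_)
    simp [Set.singleton_inter_eq_empty.2, hne]
  have hTacc : ∀ η, q ∈ closure (T η) := fun η => hψ.vertex_mem_closure_im (N := {η}) rfl htlt
  have hTpre : ∀ η, IsPreconnected (T η) :=
    fun η => hψ.isPreconnected_im isPreconnected_singleton isPreconnected_Ioo hIoo0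
  set σp : Set X := im φ {η₁} (Ioo 1 b) with hσp_def
  set σm : Set X := im φ {η₁} (Ioo a 1) with hσm_def
  have hσpopen : IsOpen σp := hc.isOpen_im (hdiscrete η₁) isOpen_Ioo (fun h => not_top_lt h.2)
  have hσmopen : IsOpen σm := hc.isOpen_im (hdiscrete η₁) isOpen_Ioo (fun h => not_top_lt h.2)
  have hIoodisj : Ioo a 1 ∩ Ioo (1:ℝ≥0∞) b = ∅ := by
    rw [eq_empty_iff_forall_notMem]
    rintro x ⟨hx1, hx2⟩
    exact absurd (lt_trans hx1.2 hx2.1) (lt_irrefl x)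
  have hσdisj : σm ∩ σp = ∅ :=
    hc.disjoint_im (fun h => not_top_lt h.2) (fun h => not_top_lt h.2) (Or.inr hIoodisj)
  have hsplit : V \ {q} ⊆ σm ∪ σp := by
    rintro x ⟨hxV, hxq⟩
    have hxS : x ∈ S := hVsub hxV
    rcases mem_im.1 hxS with ⟨n, r, hn, hr, rfl⟩
    have hn' : n = η₁ := hn
    subst hn'
    have hr1 : (r : ℝ≥0∞) ≠ 1 := by
      intro h1
      exact hxq (show φ (n, r) = q by
        rw [hq_def]; exact congrArg φ (Prod.ext rfl (Subtype.ext h1)))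
    rcases lt_or_gt_of_ne hr1 with h | h
    · exact Or.inl (mem_im_of rfl ⟨hr.1, h⟩)
    · exact Or.inr (mem_im_of rfl ⟨h, hr.2⟩)
  have hside : ∀ η, T η ⊆ σm ∨ T η ⊆ σp := fun η =>
    (hTpre η).subset_or_subset hσmopen hσpopen (Set.disjoint_iff_inter_eq_empty.2 hσdisj)
      ((hTsub η).trans hsplit)
  have himg : ∀ (I0 : Set ℝ≥0∞), I0 ⊆ Ioo a b → ∀ η, T η ⊆ im φ {η₁} I0 →
      (f '' T η ⊆ I0) ∧ OrdConnected (f '' T η) ∧ (f '' T η).Nonempty ∧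
      (1:ℝ≥0∞) ∈ closure (f '' T η) := by
    intro I0 hI0 η hTσ
    have hI0top : ⊤ ∉ I0 := fun h => habtop (hI0 h)
    have hfv : ∀ x ∈ T η, f x ∈ I0 := by
      intro x hx
      rcases mem_im.1 (hTσ hx) with ⟨n, r, hn, hr, heq⟩
      subst heq
      rw [hfval n r (fun htp => hI0top (htp ▸ hr))]
      exact hr
    refine ⟨?_, ?_, (hTne η).image f, ?_⟩
    · rintro _ ⟨x, hx, rfl⟩
      exact hfv x hx
    · exact ((hTpre η).image f
        (hfcont.mono (hTσ.trans (hc.im_subset_target_diff hI0top)))).ordConnected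
    · rw [mem_closure_iff]
      intro o ho h1o
      have hbox2 : IsOpen (im φ {η₁} (o ∩ Ioo a b)) :=
        hc.isOpen_im (hdiscrete η₁) (ho.inter isOpen_Ioo) (fun h => habtop h.2)
      have hqbox : q ∈ im φ {η₁} (o ∩ Ioo a b) := mem_im_of rfl ⟨h1o, ha1, hb1⟩
      rcases mem_closure_iff.1 (hTacc η) _ hbox2 hqbox with ⟨x, hxbox, hxT⟩
      rcases mem_im.1 hxbox with ⟨n, r, hn, hr, heq⟩
      subst heq
      refine ⟨f (φ (n, r)), ?_, mem_image_of_mem f hxT⟩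
      rw [hfval n r (fun htp => habtop (htp ▸ hr.2))]
      exact hr.1
  have hfdisj : ∀ (I0 : Set ℝ≥0∞), I0 ⊆ Ioo a b → ∀ η η', η ≠ η' →
      T η ⊆ im φ {η₁} I0 → T η' ⊆ im φ {η₁} I0 → f '' T η ∩ f '' T η' = ∅ := by
    intro I0 hI0 η η' hne hTσ hTσ'
    have hI0top : ⊤ ∉ I0 := fun h => habtop (hI0 h)
    rw [eq_empty_iff_forall_notMem]
    rintro v ⟨⟨x, hx, rfl⟩, ⟨x', hx', hvv⟩⟩
    rcases mem_im.1 (hTσ hx) with ⟨n, r, hn, hr, heq⟩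
    rcases mem_im.1 (hTσ' hx') with ⟨n', r', hn', hr', heq'⟩
    have hn1 : n = η₁ := hn
    have hn1' : n' = η₁ := hn'
    subst heq
    subst heq'
    subst hn1
    subst hn1'
    rw [hfval _ r (fun htp => hI0top (htp ▸ hr)),
      hfval _ r' (fun htp => hI0top (htp ▸ hr'))] at hvv
    have hreq : r' = r := Subtype.ext hvv
    subst hreq
    exact eq_empty_iff_forall_notMem.1 (hTdisj η η' hne) _ ⟨hx, hx'⟩
  have sameP : ∀ η η', η ≠ η' → T η ⊆ σp → T η' ⊆ σp → False := by
    intro η η' hne hs hs'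
    have hI0 : Ioo (1:ℝ≥0∞) b ⊆ Ioo a b := fun x hx => ⟨lt_trans ha1 hx.1, hx.2⟩
    obtain ⟨hsub1, hord1, hne1, hcl1⟩ := himg (Ioo 1 b) hI0 η hs
    obtain ⟨hsub2, hord2, hne2, hcl2⟩ := himg (Ioo 1 b) hI0 η' hs'
    exact ordarg_gt 1 (hsub1.trans (fun x hx => hx.1)) (hsub2.trans (fun x hx => hx.1))
      hord1 hord2 (hfdisj (Ioo 1 b) hI0 η η' hne hs hs') hne1 hne2 hcl1 hcl2
  have sameM : ∀ η η', η ≠ η' → T η ⊆ σm → T η' ⊆ σm → False := by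
    intro η η' hne hs hs'
    have hI0 : Ioo a (1:ℝ≥0∞) ⊆ Ioo a b := fun x hx => ⟨hx.1, lt_trans hx.2 hb1⟩
    obtain ⟨hsub1, hord1, hne1, hcl1⟩ := himg (Ioo a 1) hI0 η hs
    obtain ⟨hsub2, hord2, hne2, hcl2⟩ := himg (Ioo a 1) hI0 η' hs'
    exact ordarg_lt 1 (hsub1.trans (fun x hx => hx.2)) (hsub2.trans (fun x hx => hx.2))
      hord1 hord2 (hfdisj (Ioo a 1) hI0 η η' hne hs hs') hne1 hne2 hcl1 hcl2
  rcases hside η₁ with s1 | s1 <;> rcases hside η₂ with s2 | s2 <;> rcases hside η₃ with s3 | s3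
  · exact sameM η₁ η₂ h12 s1 s2
  · exact sameM η₁ η₂ h12 s1 s2
  · exact sameM η₁ η₃ h13 s1 s3
  · exact sameP η₂ η₃ h23 s2 s3
  · exact sameM η₂ η₃ h23 s2 s3
  · exact sameP η₁ η₃ h13 s1 s3
  · exact sameP η₁ η₂ h12 s1 s2
  · exact sameP η₁ η₂ h12 s1 s2

end ConeProof
namespace ConeProof

variable {Y X : Type*} [TopologicalSpace Y] [MetricSpace X]

lemma oneManifold_of_two
    {φ : Y × PosInf → X} {U : Set X} {p : X} (hc : IsConeChart φ U p)
    (hhom : Homogeneous X)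
    (hdiscrete : ∀ y : Y, IsOpen ({y} : Set Y))
    {y₁ y₂ : Y} (hne : y₁ ≠ y₂) (hcover : ∀ η : Y, η = y₁ ∨ η = y₂) : OneManifold X := by
  classical
  set g : ℝ → ℝ≥0∞ := fun r => 1 + (ENNReal.ofReal |r|)⁻¹ with hg_def
  have hg0 : ∀ r, 0 < g r := fun r => lt_of_lt_of_le zero_lt_one le_self_add
  have hgne1top : (1:ℝ≥0∞) ≠ ⊤ := ENNReal.one_ne_top
  have hg_abs : ∀ r : ℝ, g r = g |r| := fun r => by rw [hg_def]; simp [abs_abs]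
  have hg_gt1 : ∀ r, 1 < g r := fun r =>
    ENNReal.lt_add_right hgne1top (ENNReal.inv_ne_zero.2 ENNReal.ofReal_ne_top)
  have hg_top_iff : ∀ r, g r = ⊤ ↔ r = 0 := by
    intro r
    rw [hg_def]
    simp only [ENNReal.add_eq_top]
    constructor
    · rintro (h | h)
      · exact absurd h hgne1top
      · rw [ENNReal.inv_eq_top, ENNReal.ofReal_eq_zero] at h
        exact abs_nonpos_iff.1 h
    · rintro rfl
      right
      rw [ENNReal.inv_eq_top]
      simp
  have hganti : ∀ {r r' : ℝ}, 0 ≤ r → r < r' → g r' < g r := by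
    intro r r' h0 hlt
    rw [hg_def]
    simp only [ENNReal.add_lt_add_iff_left hgne1top, ENNReal.inv_lt_inv]
    rw [abs_of_nonneg h0, abs_of_nonneg (h0.trans hlt.le)]
    exact (ENNReal.ofReal_lt_ofReal_iff (h0.trans_lt hlt)).2 hlt
  have hanti_le : ∀ {r r' : ℝ}, 0 ≤ r → r ≤ r' → g r' ≤ g r := fun h0 hle =>
    hle.eq_or_lt.elim (fun h => h ▸ le_rfl) (fun h => (hganti h0 h).le)
  have hlt_of_glt : ∀ {r r' : ℝ}, 0 ≤ r → 0 ≤ r' → g r' < g r → r < r' := by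
    intro r r' h0 h0' h
    by_contra hcc
    exact absurd (hanti_le h0' (not_lt.1 hcc)) (not_le.2 h)
  have hgeq_abs : ∀ r r' : ℝ, g r = g r' → |r| = |r'| := by
    intro r r' h
    rw [hg_def] at h
    simp only [ENNReal.add_right_inj hgne1top] at h
    have h2 : ENNReal.ofReal |r| = ENNReal.ofReal |r'| := by
      rw [← inv_inv (ENNReal.ofReal |r|), h, inv_inv]
    exact (ENNReal.ofReal_eq_ofReal_iff (abs_nonneg r) (abs_nonneg r')).1 h2
  have hgsurj : ∀ s : ℝ≥0∞, 1 < s → s < ⊤ → ∃ r : ℝ, 0 < r ∧ g r = s := by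
    intro s h1 htop
    have hs1ne0 : s - 1 ≠ 0 := fun h => absurd (tsub_eq_zero_iff_le.1 h) (not_le.2 h1)
    have hs1netop : s - 1 ≠ ⊤ := ne_top_of_le_ne_top htop.ne tsub_le_self
    set r : ℝ := ((s - 1)⁻¹).toReal with hr_def
    have hrpos : 0 < r :=
      ENNReal.toReal_pos (ENNReal.inv_ne_zero.2 hs1netop) (ENNReal.inv_ne_top.2 hs1ne0)
    refine ⟨r, hrpos, ?_⟩
    rw [hg_def]
    simp only []
    rw [abs_of_pos hrpos, hr_def, ENNReal.ofReal_toReal (ENNReal.inv_ne_top.2 hs1ne0),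
      inv_inv]
    exact add_tsub_cancel_of_le h1.le
  have hgcont : Continuous g := by
    rw [hg_def]
    exact continuous_const.add ((ENNReal.continuous_ofReal.comp continuous_abs).inv)
  set e : ℝ → X := fun r => φ (if 0 ≤ r then y₁ else y₂, ⟨g r, hg0 r⟩) with he_def
  have he0 : e 0 = p := by
    rw [he_def]
    simp only [le_refl, if_pos]
    rw [show (⟨g 0, hg0 0⟩ : PosInf) = PosInf.infty from Subtype.ext ((hg_top_iff 0).2 rfl)]
    exact hc.map_infty y₁
  -- e is injective
  have hinj : Function.Injective e := by
    intro r r' h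
    rw [he_def] at h
    simp only [] at h
    by_cases hr0 : r = 0
    · by_cases hr'0 : r' = 0
      · rw [hr0, hr'0]
      · exfalso
        have h1 : g r = ⊤ := (hg_top_iff r).2 hr0
        have h2 : g r' ≠ ⊤ := fun hh => hr'0 ((hg_top_iff r').1 hh)
        have : φ (if 0 ≤ r then y₁ else y₂, ⟨g r, hg0 r⟩) = p := by
          rw [show (⟨g r, hg0 r⟩ : PosInf) = PosInf.infty from Subtype.ext h1]
          exact hc.map_infty _
        exact hc.ne_vertex (z := (if 0 ≤ r' then y₁ else y₂, ⟨g r', hg0 r'⟩)) h2 (h ▸ this)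
    · by_cases hr'0 : r' = 0
      · exfalso
        have h1 : g r' = ⊤ := (hg_top_iff r').2 hr'0
        have h2 : g r ≠ ⊤ := fun hh => hr0 ((hg_top_iff r).1 hh)
        have : φ (if 0 ≤ r' then y₁ else y₂, ⟨g r', hg0 r'⟩) = p := by
          rw [show (⟨g r', hg0 r'⟩ : PosInf) = PosInf.infty from Subtype.ext h1]
          exact hc.map_infty _
        exact hc.ne_vertex (z := (if 0 ≤ r then y₁ else y₂, ⟨g r, hg0 r⟩))
          (fun hh => hr0 ((hg_top_iff r).1 hh)) (h.symm ▸ this)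
      · have h2 : g r ≠ ⊤ := fun hh => hr0 ((hg_top_iff r).1 hh)
        have h2' : g r' ≠ ⊤ := fun hh => hr'0 ((hg_top_iff r').1 hh)
        obtain ⟨hy, hv⟩ := hc.inj h2 h2' h
        have habs : |r| = |r'| := hgeq_abs r r' (congrArg Subtype.val hv)
        rcases le_or_gt 0 r with hsr | hsr <;> rcases le_or_gt 0 r' with hsr' | hsr'
        · rwa [abs_of_nonneg hsr, abs_of_nonneg hsr'] at habs
        · exact absurd hy (by simp only [if_pos hsr, if_neg (not_le.2 hsr')]; exact hne)
        · exact absurd hy (by simp only [if_neg (not_le.2 hsr), if_pos hsr']; exact hne.symm)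
        · rw [abs_of_neg hsr, abs_of_neg hsr'] at habs
          linarith
  -- e is continuous
  have hcol_cont : ∀ η : Y, Continuous (fun r : ℝ => φ (η, ⟨g r, hg0 r⟩)) := fun η =>
    hc.continuous.comp ((Continuous.prodMk_right η).comp (hgcont.subtype_mk _))
  have hcont : Continuous e := by
    rw [continuous_iff_continuousAt]
    intro r
    rcases lt_trichotomy r 0 with hneg | rfl | hpos
    · refine ((hcol_cont y₂).continuousAt).congr ?_
      filter_upwards [Iio_mem_nhds hneg] with r' hr'
      simp only [he_def, if_neg (not_le.2 (mem_Iio.1 hr'))]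
    · rw [ContinuousAt, he0, Filter.tendsto_def]
      intro s hs
      obtain ⟨c₁, hc₁, hm₁⟩ := hc.eventually_gt_mem hs y₁
      obtain ⟨c₂, hc₂, hm₂⟩ := hc.eventually_gt_mem hs y₂
      have hev : g ⁻¹' (Ioi (max c₁ c₂)) ∈ 𝓝 (0:ℝ) := by
        have hg0top : g 0 = ⊤ := (hg_top_iff 0).2 rfl
        have := hgcont.continuousAt (x := (0:ℝ))
        rw [ContinuousAt, hg0top] at this
        exact this (Ioi_mem_nhds (max_lt hc₁ hc₂))
      refine Filter.mem_of_superset hev ?_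
      intro r' hr'
      rw [Set.mem_preimage, he_def]
      simp only []
      split_ifs
      · exact hm₁ _ ((le_max_left _ _).trans_lt hr')
      · exact hm₂ _ ((le_max_right _ _).trans_lt hr')
    · refine ((hcol_cont y₁).continuousAt).congr ?_
      filter_upwards [Ioi_mem_nhds hpos] with r' hr'
      simp only [he_def, if_pos (le_of_lt (mem_Ioi.1 hr'))]
  -- monotonicity on the negative side
  have hganti' : ∀ {r r' : ℝ}, r < r' → r' < 0 → g r < g r' := by
    intro r r' h1 h2
    rw [hg_abs r, hg_abs r']
    exact hganti (abs_nonneg r') (by rw [abs_of_neg h2, abs_of_neg (h1.trans h2)]; linarith)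
  have hanti_le' : ∀ {r r' : ℝ}, r ≤ r' → r' < 0 → g r ≤ g r' := by
    intro r r' h1 h2
    rcases h1.eq_or_lt with rfl | h
    · exact le_rfl
    · exact (hganti' h h2).le
  have hlt_of_glt' : ∀ {r r' : ℝ}, r < 0 → r' < 0 → g r < g r' → r < r' := by
    intro r r' h0 h0' h
    by_contra hcc
    exact absurd (hanti_le' (not_lt.1 hcc) h0) (not_le.2 h)
  have hg_neg : ∀ r : ℝ, 0 < r → g (-r) = g r := by
    intro r hr
    rw [hg_abs (-r), abs_neg, abs_of_pos hr]
  -- image formulas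
  have him_pos : ∀ α β : ℝ, 0 < α → α < β →
      e '' (Ioo α β) = im φ {y₁} (Ioo (g β) (g α)) := by
    intro α β hα hαβ
    ext x
    constructor
    · rintro ⟨r, ⟨hr1, hr2⟩, rfl⟩
      have hr0 : 0 ≤ r := (hα.trans hr1).le
      rw [he_def]
      simp only [if_pos hr0]
      exact mem_im_of rfl ⟨hganti hr0 hr2, hganti hα.le hr1⟩
    · intro hx
      rcases mem_im.1 hx with ⟨n, rr, hn, hrr, heq⟩
      have hn1 : n = y₁ := hn
      subst hn1
      have h1rr : 1 < (rr : ℝ≥0∞) := lt_trans (hg_gt1 β) hrr.1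
      obtain ⟨r, hrpos, hgr⟩ := hgsurj rr h1rr (lt_of_lt_of_le hrr.2 le_top)
      refine ⟨r, ⟨?_, ?_⟩, ?_⟩
      · exact hlt_of_glt hα.le hrpos.le (by rw [hgr]; exact hrr.2)
      · exact hlt_of_glt hrpos.le (hα.le.trans hαβ.le) (by rw [hgr]; exact hrr.1)
      · rw [he_def]
        simp only [if_pos hrpos.le]
        rw [← heq]
        exact congrArg φ (Prod.ext rfl (Subtype.ext hgr))
  have him_neg : ∀ α β : ℝ, α < β → β < 0 →
      e '' (Ioo α β) = im φ {y₂} (Ioo (g α) (g β)) := by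
    intro α β hαβ hβ
    ext x
    constructor
    · rintro ⟨r, ⟨hr1, hr2⟩, rfl⟩
      have hr0 : r < 0 := hr2.trans hβ
      rw [he_def]
      simp only [if_neg (not_le.2 hr0)]
      exact mem_im_of rfl ⟨hganti' hr1 hr0, hganti' hr2 hβ⟩
    · intro hx
      rcases mem_im.1 hx with ⟨n, rr, hn, hrr, heq⟩
      have hn2 : n = y₂ := hn
      subst hn2
      have hgα1 : 1 < g α := hg_gt1 α
      have h1rr : 1 < (rr : ℝ≥0∞) := lt_trans hgα1 hrr.1
      obtain ⟨r₀, hrpos, hgr⟩ := hgsurj rr h1rr (lt_of_lt_of_le hrr.2 le_top)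
      have hgneg : g (-r₀) = (rr : ℝ≥0∞) := by rw [hg_neg r₀ hrpos]; exact hgr
      refine ⟨-r₀, ⟨?_, ?_⟩, ?_⟩
      · exact hlt_of_glt' (hαβ.trans hβ) (neg_neg_of_pos hrpos) (by rw [hgneg]; exact hrr.1)
      · exact hlt_of_glt' (neg_neg_of_pos hrpos) hβ (by rw [hgneg]; exact hrr.2)
      · rw [he_def]
        simp only [if_neg (not_le.2 (neg_neg_of_pos hrpos))]
        rw [← heq]
        exact congrArg φ (Prod.ext rfl (Subtype.ext hgneg))
  have him_mid : ∀ α β : ℝ, α < 0 → 0 < β →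
      e '' (Ioo α β) = im φ {y₁} (Ioi (g β)) ∪ im φ {y₂} (Ioi (g α)) := by
    intro α β hα hβ
    ext x
    constructor
    · rintro ⟨r, ⟨hr1, hr2⟩, rfl⟩
      rw [he_def]
      simp only []
      split_ifs with hsr
      · exact Or.inl (mem_im_of rfl (hganti hsr hr2))
      · exact Or.inr (mem_im_of rfl (hganti' hr1 (not_le.1 hsr)))
    · rintro (hx | hx)
      · rcases mem_im.1 hx with ⟨n, rr, hn, hrr, heq⟩
        have hn1 : n = y₁ := hn
        subst hn1
        by_cases htop : (rr : ℝ≥0∞) = ⊤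
        · refine ⟨0, ⟨hα, hβ⟩, ?_⟩
          rw [he0, ← heq, show rr = PosInf.infty from Subtype.ext htop]
          exact (hc.map_infty _).symm
        · obtain ⟨r, hrpos, hgr⟩ := hgsurj rr (lt_trans (hg_gt1 β) hrr)
            (lt_top_iff_ne_top.2 htop)
          refine ⟨r, ⟨lt_trans hα hrpos, ?_⟩, ?_⟩
          · exact hlt_of_glt hrpos.le hβ.le (by rw [hgr]; exact hrr)
          · rw [he_def]
            simp only [if_pos hrpos.le]
            rw [← heq]
            exact congrArg φ (Prod.ext rfl (Subtype.ext hgr))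
      · rcases mem_im.1 hx with ⟨n, rr, hn, hrr, heq⟩
        have hn2 : n = y₂ := hn
        subst hn2
        by_cases htop : (rr : ℝ≥0∞) = ⊤
        · refine ⟨0, ⟨hα, hβ⟩, ?_⟩
          rw [he0, ← heq, show rr = PosInf.infty from Subtype.ext htop]
          exact (hc.map_infty _).symm
        · obtain ⟨r₀, hrpos, hgr⟩ := hgsurj rr (lt_trans (hg_gt1 α) hrr)
            (lt_top_iff_ne_top.2 htop)
          have hgneg : g (-r₀) = (rr : ℝ≥0∞) := by rw [hg_neg r₀ hrpos]; exact hgr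
          refine ⟨-r₀, ⟨?_, lt_trans (neg_neg_of_pos hrpos) hβ⟩, ?_⟩
          · exact hlt_of_glt' hα (neg_neg_of_pos hrpos) (by rw [hgneg]; exact hrr)
          · rw [he_def]
            simp only [if_neg (not_le.2 (neg_neg_of_pos hrpos))]
            rw [← heq]
            exact congrArg φ (Prod.ext rfl (Subtype.ext hgneg))
  have hWopen : ∀ α β : ℝ, α < 0 → 0 < β →
      IsOpen (im φ {y₁} (Ioi (g β)) ∪ im φ {y₂} (Ioi (g α))) := by
    intro α β hα hβ
    have hgβtop : g β ≠ ⊤ := fun h => hβ.ne' ((hg_top_iff β).1 h)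
    have hgαtop : g α ≠ ⊤ := fun h => hα.ne ((hg_top_iff α).1 h)
    have hmtop : max (g α) (g β) < ⊤ :=
      max_lt (lt_top_iff_ne_top.2 hgαtop) (lt_top_iff_ne_top.2 hgβtop)
    have hequiv : im φ {y₁} (Ioi (g β)) ∪ im φ {y₂} (Ioi (g α)) =
        im φ {y₁} (Ioo (g β) ⊤) ∪ im φ {y₂} (Ioo (g α) ⊤) ∪
          im φ univ (Ioi (max (g α) (g β))) := by
      apply subset_antisymm
      · rintro x (hx | hx)
        · rcases mem_im.1 hx with ⟨n, rr, hn, hrr, heq⟩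
          by_cases htop : (rr : ℝ≥0∞) = ⊤
          · exact Or.inr (mem_im.2 ⟨n, rr, trivial, htop ▸ hmtop, heq⟩)
          · exact Or.inl (Or.inl (mem_im.2 ⟨n, rr, hn, ⟨hrr, lt_top_iff_ne_top.2 htop⟩, heq⟩))
        · rcases mem_im.1 hx with ⟨n, rr, hn, hrr, heq⟩
          by_cases htop : (rr : ℝ≥0∞) = ⊤
          · exact Or.inr (mem_im.2 ⟨n, rr, trivial, htop ▸ hmtop, heq⟩)
          · exact Or.inl (Or.inr (mem_im.2 ⟨n, rr, hn, ⟨hrr, lt_top_iff_ne_top.2 htop⟩, heq⟩))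
      · rintro x ((hx | hx) | hx)
        · exact Or.inl (im_mono Subset.rfl (fun u hu => hu.1) hx)
        · exact Or.inr (im_mono Subset.rfl (fun u hu => hu.1) hx)
        · rcases mem_im.1 hx with ⟨n, rr, -, hrr, heq⟩
          rcases hcover n with rfl | rfl
          · exact Or.inl (mem_im.2 ⟨n, rr, rfl, mem_Ioi.2 (lt_of_le_of_lt (le_max_right _ _) hrr), heq⟩)
          · exact Or.inr (mem_im.2 ⟨n, rr, rfl, mem_Ioi.2 (lt_of_le_of_lt (le_max_left _ _) hrr), heq⟩)
    rw [hequiv]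
    exact ((hc.isOpen_im (hdiscrete y₁) isOpen_Ioo (fun h => not_top_lt h.2)).union
      (hc.isOpen_im (hdiscrete y₂) isOpen_Ioo (fun h => not_top_lt h.2))).union
      (hc.isOpen_im_Ioi hmtop)
  have hopen : IsOpenMap e := by
    intro O hO
    rw [isOpen_iff_forall_mem_open]
    rintro x ⟨r, hrO, rfl⟩
    obtain ⟨ε, hε, hball⟩ := Metric.isOpen_iff.1 hO r hrO
    rw [Real.ball_eq_Ioo] at hball
    rcases lt_trichotomy r 0 with hneg | rfl | hpos
    · refine ⟨e '' (Ioo (r - ε) (min (r + ε) (r / 2))), ?_, ?_, ?_⟩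
      · refine (image_mono (fun u hu => hball ⟨hu.1, ?_⟩))
        exact lt_of_lt_of_le hu.2 (min_le_left _ _)
      · rw [him_neg (r - ε) (min (r + ε) (r / 2))
          (lt_min (by linarith) (by linarith))
          (lt_of_le_of_lt (min_le_right _ _) (by linarith))]
        exact hc.isOpen_im (hdiscrete y₂) isOpen_Ioo (fun h => not_top_lt h.2)
      · exact ⟨r, ⟨by linarith, lt_min (by linarith) (by linarith)⟩, rfl⟩
    · refine ⟨e '' (Ioo (-ε) ε), ?_, ?_, ?_⟩
      · refine image_mono (fun u hu => hball ⟨by simpa using hu.1, by simpa using hu.2⟩)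
      · rw [him_mid (-ε) ε (neg_neg_of_pos hε) hε]
        exact hWopen (-ε) ε (neg_neg_of_pos hε) hε
      · exact ⟨0, ⟨neg_neg_of_pos hε, hε⟩, rfl⟩
    · refine ⟨e '' (Ioo (max (r - ε) (r / 2)) (r + ε)), ?_, ?_, ?_⟩
      · refine image_mono (fun u hu => hball ⟨?_, hu.2⟩)
        exact lt_of_le_of_lt (le_max_left _ _) hu.1
      · rw [him_pos (max (r - ε) (r / 2)) (r + ε)
          (lt_of_lt_of_le (by linarith) (le_max_right _ _))
          (max_lt (by linarith) (by linarith))]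
        exact hc.isOpen_im (hdiscrete y₁) isOpen_Ioo (fun h => not_top_lt h.2)
      · exact ⟨r, ⟨max_lt (by linarith) (by linarith), by linarith⟩, rfl⟩
  have hemb : Topology.IsOpenEmbedding e :=
    Topology.IsOpenEmbedding.of_continuous_injective_isOpenMap hcont hinj hopen
  intro x
  obtain ⟨h, hp⟩ := hhom p x
  refine ⟨h '' (Set.range e), h.isOpenMap _ hemb.isOpen_range, ?_, ?_⟩
  · rw [← hp]
    exact mem_image_of_mem h ⟨0, he0⟩
  · exact ⟨(Homeomorph.image h (Set.range e)).symm.trans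
      (Topology.IsEmbedding.toHomeomorph (f := e) hemb.toIsEmbedding).symm⟩

end ConeProof
namespace ConeProof

variable {Y X : Type*} [TopologicalSpace Y] [MetricSpace X]

lemma base_preconnected
    {φ : Y × PosInf → X} {U : Set X} {p : X} (hc : IsConeChart φ U p)
    (hhom : Homogeneous X) (hman : ¬ OneManifold X) : PreconnectedSpace Y := by
  have hchart : ∀ q : X, ∃ (ψ : Y × PosInf → X) (W : Set X), IsConeChart ψ W q := by
    intro q
    obtain ⟨h, hp⟩ := hhom p q
    exact ⟨h ∘ φ, h '' U, by rw [← hp]; exact hc.comp_homeomorph h⟩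
  by_contra hY
  have hnp : ¬ IsPreconnected (univ : Set Y) := fun h => hY ⟨h⟩
  unfold IsPreconnected at hnp
  push_neg at hnp
  obtain ⟨Y₁, Y₂, h1, h2, hcovs, hne1', hne2', hccap⟩ := hnp
  have hcov : Y₁ ∪ Y₂ = univ := univ_subset_iff.1 hcovs
  have hne1 : Y₁.Nonempty := by simpa using hne1'
  have hne2 : Y₂.Nonempty := by simpa using hne2'
  have hdisj : Y₁ ∩ Y₂ = ∅ := by
    rw [univ_inter] at hccap
    exact hccap
  have hiso : ∀ y : Y, IsOpen ({y} : Set Y) := fun y =>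
    isolated_of_split hc hchart h1 h2 hne1 hne2 hdisj hcov y
  obtain ⟨ya, hya⟩ := hne1
  obtain ⟨yb, hyb⟩ := hne2
  have hab : ya ≠ yb := fun h => (eq_empty_iff_forall_notMem.1 hdisj ya ⟨hya, h ▸ hyb⟩)
  have hcover : ∀ η : Y, η = ya ∨ η = yb := by
    intro η
    by_contra hcc
    push_neg at hcc
    exact not_three_isolated hc hchart hiso hcc.1 hcc.2 hab
  exact hman (oneManifold_of_two hc hhom hiso hab hcover)

lemma punctured_connected
    (hchart : ∀ q : X, ∃ (ψ : Y × PosInf → X) (W : Set X), IsConeChart ψ W q)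
    (hYpre : PreconnectedSpace Y)
    {G : Set X} (hG : IsOpen G) (hGc : IsConnected G) {a : X} (ha : a ∈ G) :
    IsConnected (G \ {a}) := by
  obtain ⟨ψ, W, hψ⟩ := hchart a
  obtain ⟨t, htlt, hVsub⟩ := hψ.exists_im_subset hG ha
  set V := im ψ univ (Ioi t) with hV_def
  have hVopen : IsOpen V := hψ.isOpen_im_Ioi htlt
  haveI : Nonempty Y := hψ.nonempty_base
  have haV : a ∈ V := hψ.vertex_mem_im univ_nonempty htlt
  set M := im ψ univ (Ioo t ⊤) with hM_def
  have hMV : M = V \ {a} := (hψ.im_Ioi_diff_vertex univ t).symm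
  have hMpre : IsPreconnected M :=
    hψ.isPreconnected_im isPreconnected_univ isPreconnected_Ioo
      (fun x hx => lt_of_le_of_lt zero_le hx.1)
  have hMne : M.Nonempty := by
    obtain ⟨r, hr1, hr2⟩ := exists_between htlt
    exact ⟨ψ (Classical.arbitrary Y, ⟨r, lt_of_le_of_lt zero_le hr1⟩),
      mem_im_of trivial ⟨hr1, hr2⟩⟩
  have haM : a ∈ closure M := hψ.vertex_mem_closure_im (N := univ) (y := Classical.arbitrary Y) trivial htlt
  have hMsub : M ⊆ G \ {a} := by
    rw [hMV]
    exact diff_subset_diff hVsub Subset.rfl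
  constructor
  · exact hMne.mono hMsub
  · intro u v hu hv hcov hneu hnev
    by_contra hcc
    rw [not_nonempty_iff_eq_empty] at hcc
    have hMuv : M ⊆ u ∨ M ⊆ v := by
      rcases (M ∩ v).eq_empty_or_nonempty with hv0 | hv0
      · left
        intro x hx
        rcases hcov (hMsub hx) with h | h
        · exact h
        · exact (eq_empty_iff_forall_notMem.1 hv0 x ⟨hx, h⟩).elim
      · rcases (M ∩ u).eq_empty_or_nonempty with hu0 | hu0
        · right
          intro x hx
          rcases hcov (hMsub hx) with h | h
          · exact (eq_empty_iff_forall_notMem.1 hu0 x ⟨hx, h⟩).elim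
          · exact h
        · exfalso
          obtain ⟨x, hxM, hxu, hxv⟩ := hMpre u v hu hv (hMsub.trans hcov) hu0 hv0
          exact eq_empty_iff_forall_notMem.1 hcc x ⟨hMsub hxM, hxu, hxv⟩
    have final : ∀ u' v' : Set X, IsOpen u' → IsOpen v' → (G \ {a}) ⊆ u' ∪ v' →
        ((G \ {a}) ∩ (u' ∩ v')) = ∅ → M ⊆ u' → ((G \ {a}) ∩ v').Nonempty → False := by
      intro u' v' hu' hv' hcov' hcc' hMu' hnev'
      have hGcov : G ⊆ (u' ∪ V) ∪ v' := by
        intro x hx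
        by_cases hxa : x = a
        · exact Or.inl (Or.inr (hxa ▸ haV))
        · rcases hcov' ⟨hx, hxa⟩ with h | h
          · exact Or.inl (Or.inl h)
          · exact Or.inr h
      have h1 : (G ∩ (u' ∪ V)).Nonempty := ⟨a, ha, Or.inr haV⟩
      have h2 : (G ∩ v').Nonempty := hnev'.mono (fun x hx => ⟨hx.1.1, hx.2⟩)
      obtain ⟨x, hxG, hxuv, hxv⟩ :=
        hGc.isPreconnected (u' ∪ V) v' (hu'.union hVopen) hv' hGcov h1 h2
      by_cases hxa : x = a
      · subst hxa
        obtain ⟨m, hm1, hm2⟩ := mem_closure_iff.1 haM (v' ∩ V) (hv'.inter hVopen) ⟨hxv, haV⟩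
        exact eq_empty_iff_forall_notMem.1 hcc' m ⟨hMsub hm2, hMu' hm2, hm1.1⟩
      · have hxG' : x ∈ G \ {a} := ⟨hxG, hxa⟩
        rcases hxuv with h | h
        · exact eq_empty_iff_forall_notMem.1 hcc' x ⟨hxG', h, hxv⟩
        · have hxM : x ∈ M := by
            rw [hMV]
            exact ⟨h, hxa⟩
          exact eq_empty_iff_forall_notMem.1 hcc' x ⟨hxG', hMu' hxM, hxv⟩
    rcases hMuv with h | h
    · exact final u v hu hv hcov hcc h hnev
    · refine final v u hv hu (by rwa [union_comm]) ?_ h hneu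
      rw [inter_comm v u]
      exact hcc

end ConeProof

open ConeProof

/-- If `X` is a homogeneous locally conical connected separable metric space that is not a
1-manifold and `F ⊆ X` is finite, then `X \ F` is path connected. -/
theorem compl_finite_isPathConnected
    (X : Type*) [MetricSpace X] [TopologicalSpace.SeparableSpace X] [ConnectedSpace X]
    (hhom : Homogeneous X) (hlc : LocallyConical X) (hman : ¬ OneManifold X)
    (F : Set X) (hF : F.Finite) :
    IsPathConnected Fᶜ := by
  classical
  haveI : Nonempty X := (inferInstance : ConnectedSpace X).toNonempty
  obtain ⟨U, -, Y, instY, φ, p, hc⟩ := hlc (Classical.arbitrary X)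
  letI := instY
  have hchart : ∀ q : X, ∃ (ψ : Y × PosInf → X) (W : Set X), IsConeChart ψ W q := by
    intro q
    obtain ⟨h, hp⟩ := hhom p q
    exact ⟨h ∘ φ, h '' U, by rw [← hp]; exact hc.comp_homeomorph h⟩
  have hYpre : PreconnectedSpace Y := base_preconnected hc hhom hman
  haveI : LocallyPathConnectedSpace X := by
    constructor
    intro x
    rw [Filter.hasBasis_self]
    intro s hs
    obtain ⟨ψ, W, hψ⟩ := hchart x
    haveI : Nonempty Y := hψ.nonempty_base
    obtain ⟨o, hos, hoopen, hxo⟩ := mem_nhds_iff.1 hs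
    obtain ⟨t, htlt, hVsub⟩ := hψ.exists_im_subset hoopen hxo
    have hmem : im ψ univ (Ioi t) ∈ 𝓝 x :=
      (hψ.isOpen_im_Ioi htlt).mem_nhds (hψ.vertex_mem_im univ_nonempty htlt)
    exact ⟨im ψ univ (Ioi t), hmem, hψ.isPathConnected_im_Ioi htlt, hVsub.trans hos⟩
  have key : ∀ F' : Set X, F'.Finite → IsConnected (F'ᶜ) := by
    intro F' hF'
    refine Set.Finite.induction_on (motive := fun s _ => IsConnected sᶜ) F' hF' ?_ ?_
    · rw [compl_empty]
      exact isConnected_univ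
    · intro a s ha hs ih
      have hcompl : (insert a s)ᶜ = sᶜ \ {a} := by
        rw [Set.insert_eq, Set.compl_union, Set.diff_eq, inter_comm]
      rw [hcompl]
      exact punctured_connected hchart hYpre hs.isClosed.isOpen_compl ih (by simpa using ha)
  exact (hF.isClosed.isOpen_compl.isConnected_iff_isPathConnected).1 (key F hF)
end
end

section
/- Every locally conical connected metric space is locally compact and path connected. -/
open Set Topology ENNReal

noncomputable section

theorem IsConeChart.joinedIn_vertex {Y X : Type*} [TopologicalSpace Y] [TopologicalSpace X]
    {φ : Y × PosInf → X} {U : Set X} {p : X} (h : IsConeChart φ U p) {x : X} (hx : x ∈ U) :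
    JoinedIn U x p := by
  rcases eq_or_ne x p with rfl | hxp
  · exact JoinedIn.refl hx
  · have hx' : x ∈ φ '' {z : Y × PosInf | z.2 ≠ PosInf.infty} := by
      rw [h.image_restrict]; exact ⟨hx, hxp⟩
    obtain ⟨z, hz, rfl⟩ := hx'
    set t : ℝ≥0∞ := (z.2 : ℝ≥0∞) with ht
    have ht0 : 0 < t := z.2.2
    have htop : t ≠ ⊤ := fun h' => hz (Subtype.ext h')
    have hge : ∀ s : unitInterval, t ≤ t * (ENNReal.ofReal (1 - (s : ℝ)))⁻¹ := by
      intro s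
      have h1 : ENNReal.ofReal (1 - (s : ℝ)) ≤ 1 := by
        rw [← ENNReal.ofReal_one]
        exact ENNReal.ofReal_le_ofReal (by linarith [s.2.1])
      exact le_mul_of_one_le_right' (ENNReal.one_le_inv.2 h1)
    set δ : unitInterval → PosInf :=
      fun s => ⟨t * (ENNReal.ofReal (1 - (s : ℝ)))⁻¹, lt_of_lt_of_le ht0 (hge s)⟩ with hδ
    have hδcont : Continuous δ := by
      refine Continuous.subtype_mk ?_ _
      exact (ENNReal.continuous_const_mul htop).comp
        (continuous_inv.comp (ENNReal.continuous_ofReal.comp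
          (continuous_const.sub continuous_subtype_val)))
    have hδ0 : δ 0 = z.2 := by
      apply Subtype.ext
      simp [hδ, ht]
    have hδ1 : δ 1 = PosInf.infty := by
      apply Subtype.ext
      simp [hδ, ENNReal.mul_top ht0.ne']
    refine ⟨⟨⟨fun s => φ (z.1, δ s), h.continuous.comp (continuous_const.prodMk hδcont)⟩,
        ?_, ?_⟩, fun s => h.mapsTo _⟩
    · simp only [hδ0]
    · simp only [hδ1, h.map_infty]

theorem IsConeChart.exists_compact_mem_nhds {Y X : Type*} [TopologicalSpace Y] [MetricSpace X]
    {φ : Y × PosInf → X} {U : Set X} {p : X} (h : IsConeChart φ U p) {x : X} (hx : x ∈ U) :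
    ∃ K : Set X, IsCompact K ∧ K ∈ 𝓝 x := by
  haveI := h.compact_base
  haveI := h.nonempty_base
  have hcomp : ∀ S : Set ℝ≥0∞, IsClosed S → S ⊆ Ioi 0 →
      IsCompact (φ '' {z : Y × PosInf | (z.2 : ℝ≥0∞) ∈ S}) := by
    intro S hS hSsub
    refine IsCompact.image ?_ h.continuous
    have he : {z : Y × PosInf | (z.2 : ℝ≥0∞) ∈ S}
        = (univ : Set Y) ×ˢ {s : PosInf | (s : ℝ≥0∞) ∈ S} := by
      ext z; simp [Set.mem_prod]
    rw [he]
    refine isCompact_univ.prod ?_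
    rw [Subtype.isCompact_iff]
    have he2 : (Subtype.val '' {s : PosInf | (s : ℝ≥0∞) ∈ S}) = S := by
      ext v
      constructor
      · rintro ⟨s, hs, rfl⟩; exact hs
      · intro hv; exact ⟨⟨v, hSsub hv⟩, hv, rfl⟩
    rw [he2]
    exact hS.isCompact
  rcases eq_or_ne x p with rfl | hxp
  · -- x is the vertex
    set A := φ '' {z : Y × PosInf | (z.2 : ℝ≥0∞) ≤ 1} with hA
    have hAU : A ⊆ U := by rintro a ⟨z, _, rfl⟩; exact h.mapsTo z
    have hAcl : ∀ w ∈ U, w ∈ closure A → w ∈ A := by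
      intro w hwU hwc
      obtain ⟨a, haA, hlim⟩ := mem_closure_iff_seq_limit.1 hwc
      have hKU : insert w (Set.range a) ⊆ U := by
        rintro k (rfl | ⟨n, rfl⟩)
        · exact hwU
        · exact hAU (haA _)
      have hpre : IsCompact (φ ⁻¹' insert w (Set.range a)) :=
        h.proper _ hKU hlim.isCompact_insert_range
      choose zz hzS hza using haA
      have hle : Filter.map zz Filter.atTop ≤ Filter.principal (φ ⁻¹' insert w (Set.range a)) := by
        refine Filter.le_principal_iff.2 (Filter.mem_map.2 (Filter.Eventually.of_forall fun n => ?_))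
        refine Set.mem_preimage.2 ?_
        rw [hza]
        exact Set.mem_insert_of_mem _ ⟨n, rfl⟩
      obtain ⟨w', _, hcl⟩ := hpre.exists_clusterPt hle
      have hSclosed : IsClosed {z : Y × PosInf | (z.2 : ℝ≥0∞) ≤ 1} :=
        isClosed_Iic.preimage (continuous_subtype_val.comp continuous_snd)
      have hw'S : w' ∈ {z : Y × PosInf | (z.2 : ℝ≥0∞) ≤ 1} := by
        have : w' ∈ closure {z : Y × PosInf | (z.2 : ℝ≥0∞) ≤ 1} :=
          mem_closure_iff_clusterPt.2 (hcl.mono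
            (Filter.le_principal_iff.2 (Filter.mem_map.2 (Filter.Eventually.of_forall fun n => hzS n))))
        rwa [hSclosed.closure_eq] at this
      have hφz : Filter.Tendsto (fun n => φ (zz n)) Filter.atTop (𝓝 w) := by
        simpa only [hza] using hlim
      have hclw : ClusterPt (φ w') (𝓝 w) := by
        have := hcl.map h.continuous.continuousAt
          (Filter.tendsto_map (f := φ) (x := Filter.map zz Filter.atTop))
        rw [Filter.map_map] at this
        exact this.mono hφz
      have : φ w' = w := eq_of_nhds_neBot hclw
      exact ⟨w', hw'S, this⟩
    have hpA : x ∉ A := by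
      rintro ⟨z, hz1, hzp⟩
      have hzne : z.2 ≠ PosInf.infty := by
        intro he
        have h1 : (z.2 : ℝ≥0∞) ≤ 1 := hz1
        rw [he] at h1
        exact absurd h1 (by simp)
      have : φ z ∈ U \ {x} := by rw [← h.image_restrict]; exact ⟨z, hzne, rfl⟩
      exact this.2 hzp
    refine ⟨φ '' {z : Y × PosInf | (z.2 : ℝ≥0∞) ∈ Ici 1},
      hcomp (Ici 1) isClosed_Ici (fun v hv => mem_Ioi.2 (lt_of_lt_of_le zero_lt_one hv)), ?_⟩
    have hV : IsOpen (U \ closure A) := h.isOpen_target.sdiff isClosed_closure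
    refine Filter.mem_of_superset (hV.mem_nhds ⟨h.vertex_mem, fun hc => hpA (hAcl _ h.vertex_mem hc)⟩) ?_
    rintro w ⟨hwU, hwc⟩
    rcases eq_or_ne w x with rfl | hwp
    · obtain ⟨y⟩ := h.nonempty_base
      exact ⟨(y, PosInf.infty), by simp, h.map_infty y⟩
    · have : w ∈ φ '' {z : Y × PosInf | z.2 ≠ PosInf.infty} := by
        rw [h.image_restrict]; exact ⟨hwU, hwp⟩
      obtain ⟨z, hzne, rfl⟩ := this
      refine ⟨z, ?_, rfl⟩
      by_contra hlt
      have hle : (z.2 : ℝ≥0∞) ≤ 1 := le_of_not_ge fun hle => hlt hle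
      exact hwc (subset_closure ⟨z, hle, rfl⟩)
  · -- x is not the vertex
    have hx' : x ∈ φ '' {z : Y × PosInf | z.2 ≠ PosInf.infty} := by
      rw [h.image_restrict]; exact ⟨hx, hxp⟩
    obtain ⟨z, hz, rfl⟩ := hx'
    set v : ℝ≥0∞ := (z.2 : ℝ≥0∞) with hv
    have hv0 : 0 < v := z.2.2
    have hvt : v ≠ ⊤ := fun h' => hz (Subtype.ext h')
    have hopen : IsOpenEmbedding ({z : Y × PosInf | z.2 ≠ PosInf.infty}.restrict φ) := by
      refine ⟨h.isEmbedding_restrict, ?_⟩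
      rw [show range ({z : Y × PosInf | z.2 ≠ PosInf.infty}.restrict φ) = _ from Set.range_domRestrict φ _, h.image_restrict]
      exact h.isOpen_target.sdiff isClosed_singleton
    set D := {z : Y × PosInf | (z.2 : ℝ≥0∞) ∈ Ioo (v / 2) (v + 1)} with hD
    have hDopen : IsOpen D :=
      isOpen_Ioo.preimage (continuous_subtype_val.comp continuous_snd)
    have hDsub : D ⊆ {z : Y × PosInf | z.2 ≠ PosInf.infty} := by
      intro w hw hinf
      have h2 : (w.2 : ℝ≥0∞) < v + 1 := hw.2
      rw [hinf] at h2
      exact not_top_lt h2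
    have hWopen : IsOpen (φ '' D) := by
      have := hopen.isOpenMap _ (hDopen.preimage continuous_subtype_val)
      rwa [show ({z : Y × PosInf | z.2 ≠ PosInf.infty}.restrict φ) = φ ∘ Subtype.val from rfl, Set.image_comp, Subtype.image_preimage_coe,
        Set.inter_eq_self_of_subset_right hDsub] at this
    have hxD : z ∈ D :=
      ⟨ENNReal.half_lt_self hv0.ne' hvt, ENNReal.lt_add_right hvt one_ne_zero⟩
    refine ⟨φ '' {z : Y × PosInf | (z.2 : ℝ≥0∞) ∈ Icc (v / 2) (v + 1)},
      hcomp _ isClosed_Icc (fun u hu => lt_of_lt_of_le (ENNReal.half_pos hv0.ne') hu.1), ?_⟩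
    exact Filter.mem_of_superset (hWopen.mem_nhds ⟨z, hxD, rfl⟩)
      (Set.image_mono (fun w hw => ⟨hw.1.le, hw.2.le⟩))

/-- Every locally conical connected metric space is locally compact and path connected. -/
theorem locallyConical_locallyCompact_pathConnected
    (X : Type*) [MetricSpace X] [ConnectedSpace X] (hlc : LocallyConical X) :
    LocallyCompactSpace X ∧ PathConnectedSpace X := by
  have key : ∀ x : X, ∃ (U : Set X) (p : X), x ∈ U ∧ IsOpen U ∧
      (∃ K, IsCompact K ∧ K ∈ 𝓝 x) ∧ ∀ z ∈ U, JoinedIn U z p := by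
    intro x
    obtain ⟨U, hxU, Y, _, φ, p, hc⟩ := hlc x
    exact ⟨U, p, hxU, hc.isOpen_target, hc.exists_compact_mem_nhds hxU,
      fun z hz => hc.joinedIn_vertex hz⟩
  haveI : WeaklyLocallyCompactSpace X := ⟨fun x => (key x).choose_spec.choose_spec.2.2.1⟩
  refine ⟨inferInstance, ?_⟩
  obtain ⟨x₀⟩ : Nonempty X := inferInstance
  have hclopen : IsClopen {x : X | Joined x₀ x} := by
    constructor
    · rw [← isOpen_compl_iff]
      refine isOpen_iff_forall_mem_open.2 fun y hy => ?_
      obtain ⟨U, p, hyU, hUopen, -, hjoin⟩ := key y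
      refine ⟨U, fun z hz hzS => hy ?_, hUopen, hyU⟩
      exact hzS.trans (((hjoin z hz).joined).trans ((hjoin y hyU).joined.symm))
    · refine isOpen_iff_forall_mem_open.2 fun y hy => ?_
      obtain ⟨U, p, hyU, hUopen, -, hjoin⟩ := key y
      exact ⟨U, fun z hz =>
        hy.trans (((hjoin y hyU).joined).trans ((hjoin z hz).joined.symm)),
        hUopen, hyU⟩
  have huniv : {x : X | Joined x₀ x} = univ := hclopen.eq_univ ⟨x₀, Joined.refl x₀⟩
  refine ⟨⟨x₀⟩, fun a b => ?_⟩
  have ha : a ∈ {x : X | Joined x₀ x} := by rw [huniv]; trivial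
  have hb : b ∈ {x : X | Joined x₀ x} := by rw [huniv]; trivial
  exact ha.symm.trans hb
end
end

section
/- If X is a homogeneous locally conical connected separable metric space that is not a 1-manifold, and φ : Y × (0,∞] → U is a cone chart for an open subset U of X, then the compact space Y has at least three elements. -/
open Set Topology ENNReal

noncomputable section

/-- Auxiliary: homeomorphism of a slice of a cone (vertex removed) with `(0, ∞)`. -/
def sliceHomeo {Y : Type*} [TopologicalSpace Y] (y₀ : Y) :
    ↥{z : Y × PosInf | z.1 = y₀ ∧ z.2 ≠ PosInf.infty} ≃ₜ ↥(Set.Ioi (0:ℝ)) where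
  toFun z := ⟨(z.1.2 : ℝ≥0∞).toReal, by
    have h1 : (z.1.2 : ℝ≥0∞) ≠ 0 := ne_of_gt z.1.2.2
    have h2 : (z.1.2 : ℝ≥0∞) ≠ ⊤ := fun h => z.2.2 (Subtype.ext h)
    exact ENNReal.toReal_pos h1 h2⟩
  invFun x := ⟨(y₀, ⟨ENNReal.ofReal x, by simpa using ENNReal.ofReal_pos.2 x.2⟩), by
    refine ⟨rfl, fun h => ?_⟩
    have := congrArg Subtype.val h
    simp at this⟩
  left_inv z := by
    ext
    · exact z.2.1.symm
    · show (ENNReal.ofReal ((z.1.2 : ℝ≥0∞).toReal)) = _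
      exact ENNReal.ofReal_toReal (fun h => z.2.2 (Subtype.ext h))
  right_inv x := by
    ext
    exact ENNReal.toReal_ofReal (le_of_lt x.2)
  continuous_toFun := by
    apply Continuous.subtype_mk
    refine ENNReal.continuousOn_toReal.comp_continuous ?_ ?_
    · exact continuous_subtype_val.comp ((continuous_snd.comp continuous_subtype_val))
    · exact fun z h => z.2.2 (Subtype.ext h)
  continuous_invFun := by
    apply Continuous.subtype_mk
    apply Continuous.prodMk continuous_const
    exact Continuous.subtype_mk (ENNReal.continuous_ofReal.comp continuous_subtype_val) _

/-- In a homogeneous locally conical connected separable metric space that is not a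
1-manifold, the base `Y` of any cone chart has at least three elements. -/
theorem coneChart_base_three_elements
    (X : Type*) [MetricSpace X] [TopologicalSpace.SeparableSpace X] [ConnectedSpace X]
    (hhom : Homogeneous X) (hlc : LocallyConical X) (hman : ¬ OneManifold X)
    {Y : Type*} [TopologicalSpace Y] {φ : Y × PosInf → X} {U : Set X} {p : X}
    (hφ : IsConeChart φ U p) :
    ∃ y₁ y₂ y₃ : Y, y₁ ≠ y₂ ∧ y₁ ≠ y₃ ∧ y₂ ≠ y₃ := by
  by_contra hcon
  push_neg at hcon
  obtain ⟨y₀⟩ := hφ.nonempty_base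
  haveI := hφ.metrizable_base
  letI : MetricSpace Y := TopologicalSpace.metrizableSpaceMetric Y
  -- singletons are open in Y
  have hsing : ∀ y : Y, IsOpen ({y} : Set Y) := by
    intro y
    have hsub : ({y}ᶜ : Set Y).Subsingleton := by
      intro a ha b hb
      exact hcon y a b (fun h => ha h.symm) (fun h => hb h.symm)
    have : IsClosed ({y}ᶜ : Set Y) := hsub.finite.isClosed
    simpa using this.isOpen_compl
  -- the slice set
  set T : Set (Y × PosInf) := {z | z.1 = y₀ ∧ z.2 ≠ PosInf.infty} with hT
  set N : Set (Y × PosInf) := {z | z.2 ≠ PosInf.infty} with hN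
  have hTN : T ⊆ N := fun z hz => hz.2
  have hTopen : IsOpen T := by
    have h1 : IsOpen {z : Y × PosInf | z.1 = y₀} := by
      have := (hsing y₀).preimage (continuous_fst : Continuous (Prod.fst : Y × PosInf → Y))
      simpa [Set.preimage, Set.mem_singleton_iff] using this
    have h2 : IsOpen {z : Y × PosInf | z.2 ≠ PosInf.infty} := by
      have : IsClosed {z : Y × PosInf | z.2 = PosInf.infty} :=
        isClosed_singleton.preimage (continuous_snd : Continuous (Prod.snd : Y × PosInf → PosInf))
      simpa [Set.compl_setOf] using this.isOpen_compl
    have : T = {z : Y × PosInf | z.1 = y₀} ∩ {z : Y × PosInf | z.2 ≠ PosInf.infty} := rfl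
    rw [this]; exact h1.inter h2
  -- the restriction of φ to N is an open embedding
  have hrange : Set.range (N.restrict φ) = U \ {p} := by
    exact (Set.range_domRestrict φ N).trans hφ.image_restrict
  have hoe : Topology.IsOpenEmbedding (N.restrict φ) := by
    refine ⟨hφ.isEmbedding_restrict, ?_⟩
    rw [hrange]
    exact hφ.isOpen_target.sdiff isClosed_singleton
  -- φ '' T is open in X
  have himT : (N.restrict φ) '' (Subtype.val ⁻¹' T) = φ '' T := by
    show (N.domRestrict φ) '' _ = _
    rw [Set.domRestrict_eq, Set.image_comp, Subtype.image_preimage_coe,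
      Set.inter_eq_self_of_subset_right hTN]
  have hTopenX : IsOpen (φ '' T) := by
    rw [← himT]
    exact hoe.isOpenMap _ (hTopen.preimage continuous_subtype_val)
  -- φ '' T is homeomorphic to ℝ
  have hembT : Topology.IsEmbedding (T.restrict φ) := by
    have : T.restrict φ = (N.restrict φ) ∘ (Set.inclusion hTN) := rfl
    rw [this]
    exact hφ.isEmbedding_restrict.comp (Topology.IsEmbedding.inclusion hTN)
  have hhomeo : Nonempty (↥(φ '' T) ≃ₜ ℝ) := by
    refine ⟨?_⟩
    refine ((Homeomorph.setCongr ?_).symm.trans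
      hembT.toHomeomorph.symm).trans
      (((sliceHomeo y₀).trans Real.expOrderIso.toHomeomorph.symm))
    exact Set.range_domRestrict φ T
  -- a point of φ '' T
  have hone : (⟨(1:ℝ≥0∞), by simp⟩ : PosInf) ≠ PosInf.infty := by
    intro h
    have := congrArg Subtype.val h
    simp at this
  have hq : φ (y₀, ⟨(1:ℝ≥0∞), by simp⟩) ∈ φ '' T :=
    Set.mem_image_of_mem φ ⟨rfl, hone⟩
  -- homogeneity: X is a 1-manifold
  apply hman
  intro x
  obtain ⟨h, hh⟩ := hhom (φ (y₀, ⟨(1:ℝ≥0∞), by simp⟩)) x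
  refine ⟨h '' (φ '' T), h.isOpenMap _ hTopenX, ⟨_, hq, hh⟩, ?_⟩
  obtain ⟨e⟩ := hhomeo
  exact ⟨(h.image (φ '' T)).symm.trans e⟩
end
end

section
/- Let X be a locally compact separable metric space, let φ : Y × (0,∞] → U be a cone chart for an open subset U of X, and let ρ be the restriction to X of a metric on the one-point compactification of X. Then there exists ε > 0 such that for every homeomorphism h of X onto itself with sup_{x∈X} ρ(h(x), x) < ε, the composition h∘φ : Y × (0,∞] → h(U) is a cone chart for the open set h(U), and φ and h∘φ are 2-interlaced. -/
open Set Topology ENNReal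

noncomputable section

-- surjectivity onto U
lemma IsConeChart.surjOn {Y X : Type*} [TopologicalSpace Y] [TopologicalSpace X]
    {φ : Y × PosInf → X} {U : Set X} {p : X} (hφ : IsConeChart φ U p) :
    ∀ x ∈ U, ∃ z, φ z = x := by
  intro x hx
  by_cases hxp : x = p
  · obtain ⟨y⟩ := hφ.nonempty_base
    exact ⟨(y, PosInf.infty), by rw [hφ.map_infty y, hxp]⟩
  · have : x ∈ U \ {p} := ⟨hx, hxp⟩
    rw [← hφ.image_restrict] at this
    obtain ⟨z, _, hz⟩ := this
    exact ⟨z, hz⟩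

lemma IsConeChart.isCompact_chartIm {Y X : Type*} [TopologicalSpace Y]
    [TopologicalSpace X] [T2Space X] {φ : Y × PosInf → X} {U : Set X} {p : X}
    (hφ : IsConeChart φ U p) {t : ℝ≥0∞} (ht : 0 < t) :
    IsCompact (chartIm φ (Ici t)) := by
  haveI := hφ.compact_base
  have hC : IsCompact {x : PosInf | t ≤ (x : ℝ≥0∞)} := by
    rw [Topology.IsEmbedding.subtypeVal.isCompact_iff]
    have : Subtype.val '' {x : PosInf | t ≤ (x : ℝ≥0∞)} = Icc t ⊤ := by
      ext r
      constructor
      · rintro ⟨⟨r, hr⟩, h, rfl⟩; exact ⟨h, le_top⟩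
      · rintro ⟨h1, _⟩; exact ⟨⟨r, lt_of_lt_of_le ht h1⟩, h1, rfl⟩
    rw [this]
    exact isClosed_Icc.isCompact
  have : {z : Y × PosInf | (z.2 : ℝ≥0∞) ∈ Ici t} = (univ : Set Y) ×ˢ {x : PosInf | t ≤ (x : ℝ≥0∞)} := by
    ext z; simp [Set.mem_prod, Set.mem_Ici]
  unfold chartIm
  rw [this]
  exact (isCompact_univ.prod hC).image hφ.continuous

lemma IsConeChart.isOpen_chartIm {Y X : Type*} [TopologicalSpace Y]
    [TopologicalSpace X] [T2Space X] [LocallyCompactSpace X] {φ : Y × PosInf → X} {U : Set X} {p : X}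
    (hφ : IsConeChart φ U p) {s : ℝ≥0∞} (hs : s < ⊤) :
    IsOpen (chartIm φ (Ioi s)) := by
  haveI := hφ.compact_base
  set D := {z : Y × PosInf | z.2 ≠ PosInf.infty} with hD
  -- the restricted map is an open embedding
  have hrange : range (D.restrict φ) = U \ {p} := by
    exact (Set.range_domRestrict φ D).trans hφ.image_restrict
  have hopen_emb : Topology.IsOpenEmbedding (D.restrict φ) :=
    ⟨hφ.isEmbedding_restrict, by
      rw [hrange]; exact hφ.isOpen_target.sdiff isClosed_singleton⟩
  -- inner open part
  have hcont2 : Continuous fun z : Y × PosInf => (z.2 : ℝ≥0∞) :=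
    continuous_subtype_val.comp continuous_snd
  have hO1open : IsOpen (φ '' ({z : Y × PosInf | s < (z.2 : ℝ≥0∞)} ∩ D)) := by
    have : φ '' ({z : Y × PosInf | s < (z.2 : ℝ≥0∞)} ∩ D)
        = (D.restrict φ) '' (Subtype.val ⁻¹' {z : Y × PosInf | s < (z.2 : ℝ≥0∞)}) := by
      ext x
      constructor
      · rintro ⟨z, ⟨h1, h2⟩, rfl⟩; exact ⟨⟨z, h2⟩, h1, rfl⟩
      · rintro ⟨⟨z, h2⟩, h1, rfl⟩; exact ⟨z, ⟨h1, h2⟩, rfl⟩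
    rw [this]
    exact hopen_emb.isOpenMap _
      ((isOpen_lt continuous_const hcont2).preimage continuous_subtype_val)
  -- neighbourhood of p
  obtain ⟨N, hNcomp, hpN, hNU⟩ := exists_compact_subset hφ.isOpen_target hφ.vertex_mem
  set C := φ '' {z : Y × PosInf | (z.2 : ℝ≥0∞) ≤ s} with hC
  have hCN : IsCompact (C ∩ N) := by
    have heq : C ∩ N = φ '' ({z : Y × PosInf | (z.2 : ℝ≥0∞) ≤ s} ∩ φ ⁻¹' N) := by
      ext x
      constructor
      · rintro ⟨⟨z, hz, rfl⟩, hN⟩; exact ⟨z, ⟨hz, hN⟩, rfl⟩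
      · rintro ⟨z, ⟨hz, hN⟩, rfl⟩; exact ⟨⟨z, hz, rfl⟩, hN⟩
    rw [heq]
    refine (IsCompact.inter_left ?_ ?_).image hφ.continuous
    · exact hφ.proper N hNU hNcomp
    · exact isClosed_le hcont2 continuous_const
  have hpC : p ∉ C := by
    rintro ⟨z, hz, hzp⟩
    have hzi : z.2 ≠ PosInf.infty := by
      intro h
      have : (z.2 : ℝ≥0∞) ≤ s := hz
      rw [h] at this
      exact absurd this (by simp [PosInf.infty, hs.ne])
    have : φ z ∈ U \ {p} := by
      rw [← hφ.image_restrict]; exact ⟨z, hzi, rfl⟩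
    exact this.2 hzp
  set W := interior N \ (C ∩ N) with hW
  have hWopen : IsOpen W := isOpen_interior.sdiff hCN.isClosed
  have hWp : p ∈ W := ⟨hpN, fun hc => hpC hc.1⟩
  have hWsub : W ⊆ chartIm φ (Ioi s) := by
    rintro x ⟨hxN, hxC⟩
    have hxU : x ∈ U := hNU (interior_subset hxN)
    obtain ⟨z, rfl⟩ := hφ.surjOn x hxU
    refine ⟨z, ?_, rfl⟩
    by_contra hle
    exact hxC ⟨⟨z, show (z.2 : ℝ≥0∞) ≤ s from le_of_not_gt hle, rfl⟩, interior_subset hxN⟩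
  -- the whole set is the union
  have hunion : chartIm φ (Ioi s) = φ '' ({z : Y × PosInf | s < (z.2 : ℝ≥0∞)} ∩ D) ∪ W := by
    apply Subset.antisymm
    · rintro x ⟨z, hz, rfl⟩
      by_cases hzi : z.2 = PosInf.infty
      · right
        have : φ z = p := by
          rw [show z = (z.1, z.2) from rfl, hzi]; exact hφ.map_infty z.1
        rw [this]; exact hWp
      · left; exact ⟨z, ⟨hz, hzi⟩, rfl⟩
    · rintro x (⟨z, ⟨h1, _⟩, rfl⟩ | hx)
      · exact ⟨z, h1, rfl⟩
      · exact hWsub hx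
  rw [hunion]
  exact hO1open.union hWopen

lemma IsConeChart.comp_homeo {Y X : Type*} [TopologicalSpace Y] [TopologicalSpace X]
    {φ : Y × PosInf → X} {U : Set X} {p : X} (hφ : IsConeChart φ U p) (h : X ≃ₜ X) :
    IsConeChart (fun z => h (φ z)) (h '' U) (h p) where
  nonempty_base := hφ.nonempty_base
  compact_base := hφ.compact_base
  metrizable_base := hφ.metrizable_base
  isOpen_target := h.isOpenMap _ hφ.isOpen_target
  continuous := h.continuous.comp hφ.continuous
  mapsTo z := mem_image_of_mem h (hφ.mapsTo z)
  proper K hKU hK := by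
    have : (fun z => h (φ z)) ⁻¹' K = φ ⁻¹' (h ⁻¹' K) := rfl
    rw [this]
    refine hφ.proper _ ?_ (h.isCompact_preimage.mpr hK)
    intro x hx
    obtain ⟨y, hy, hyx⟩ := hKU hx
    rwa [← h.injective hyx]
  vertex_mem := mem_image_of_mem h hφ.vertex_mem
  map_infty y := congrArg h (hφ.map_infty y)
  isEmbedding_restrict := h.isEmbedding.comp hφ.isEmbedding_restrict
  image_restrict := by
    have : (fun z => h (φ z)) '' {z : Y × PosInf | z.2 ≠ PosInf.infty}
        = h '' (φ '' {z : Y × PosInf | z.2 ≠ PosInf.infty}) := (image_comp h φ _)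
    rw [this, hφ.image_restrict, image_diff h.injective, image_singleton]

/-- Given a cone chart `φ` for `U` in a locally compact separable metric space `X` and a
metric `m` on the one-point compactification of `X` (inducing its topology), there is an
`ε > 0` such that for every homeomorphism `h` of `X` moving no point by `ρ`-distance `ε` or
more (where `ρ` is the restriction of the metric to `X`), the map `h ∘ φ` is a cone chart
for `h(U)` and `φ` and `h ∘ φ` are 2-interlaced. -/
theorem exists_eps_small_homeo_interlaced
    {X : Type*} [MetricSpace X] [TopologicalSpace.SeparableSpace X] [LocallyCompactSpace X]
    {Y : Type*} [TopologicalSpace Y] {φ : Y × PosInf → X} {U : Set X} {p : X}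
    (hφ : IsConeChart φ U p)
    (m : MetricSpace (OnePoint X))
    (hm : m.toUniformSpace.toTopologicalSpace = (inferInstance : TopologicalSpace (OnePoint X))) :
    ∃ ε : ℝ, 0 < ε ∧ ∀ h : X ≃ₜ X,
      (⨆ x : X, @dist (OnePoint X) m.toDist (h x : OnePoint X) (x : OnePoint X)) < ε →
        IsConeChart (fun z => h (φ z)) (h '' U) (h p) ∧
        Interlaced2 φ (fun z => h (φ z)) := by
  letI m' : MetricSpace (OnePoint X) := m.replaceTopology hm.symm
  have hdd : @dist (OnePoint X) m.toDist = @dist (OnePoint X) m'.toDist := rfl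
  have hK2 := hφ.isCompact_chartIm (t := 2) (by norm_num)
  have hK3 := hφ.isCompact_chartIm (t := 3) (by norm_num)
  have hK4 := hφ.isCompact_chartIm (t := 4) (by norm_num)
  have hV1 := hφ.isOpen_chartIm (s := 1) (by norm_num)
  have hV2 := hφ.isOpen_chartIm (s := 2) (by norm_num)
  have hV3 := hφ.isOpen_chartIm (s := 3) (by norm_num)
  have hsub : ∀ {a b : ℝ≥0∞}, a < b → chartIm φ (Ici b) ⊆ chartIm φ (Ioi a) := by
    intro a b hab
    exact image_mono (fun z hz => lt_of_lt_of_le hab hz)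
  have hcoe := OnePoint.isOpenEmbedding_coe (X := X)
  have key : ∀ (K V : Set X), IsCompact K → IsOpen V → K ⊆ V →
      ∃ δ : ℝ, 0 < δ ∧ ∀ x ∈ K, ∀ y : X,
        @dist (OnePoint X) m'.toDist (y : OnePoint X) (x : OnePoint X) < δ → y ∈ V := by
    intro K V hK hV hKV
    obtain ⟨δ, hδ, hth⟩ := (hK.image hcoe.continuous).exists_thickening_subset_open
      (hcoe.isOpenMap _ hV) (image_mono hKV)
    refine ⟨δ, hδ, fun x hx y hy => ?_⟩
    have hmem : (y : OnePoint X) ∈ Metric.thickening δ ((↑) '' K) :=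
      Metric.mem_thickening_iff.mpr ⟨x, mem_image_of_mem _ hx, hy⟩
    obtain ⟨y', hy', he⟩ := hth hmem
    rwa [← OnePoint.coe_injective he]
  obtain ⟨δ1, hδ1, h1⟩ := key _ _ hK2 hV1 (hsub (by norm_num))
  obtain ⟨δ2, hδ2, h2⟩ := key _ _ hK3 hV2 (hsub (by norm_num))
  obtain ⟨δ3, hδ3, h3⟩ := key _ _ hK4 hV3 (hsub (by norm_num))
  refine ⟨min δ1 (min δ2 δ3), lt_min hδ1 (lt_min hδ2 hδ3), fun h hsup => ?_⟩
  haveI : Nonempty X := ⟨p⟩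
  have hbdd : BddAbove (range fun x : X =>
      @dist (OnePoint X) m.toDist (h x : OnePoint X) (x : OnePoint X)) := by
    obtain ⟨C, hC⟩ := Metric.isBounded_iff.mp (isCompact_univ (X := OnePoint X)).isBounded
    refine ⟨C, ?_⟩
    rintro r ⟨x, rfl⟩
    rw [hdd]
    exact hC (mem_univ _) (mem_univ _)
  have hmove : ∀ x : X,
      @dist (OnePoint X) m'.toDist (h x : OnePoint X) (x : OnePoint X) < min δ1 (min δ2 δ3) := by
    intro x
    have := lt_of_le_of_lt (le_ciSup hbdd x) hsup
    rwa [hdd] at this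
  have him : ∀ S : Set ℝ≥0∞, chartIm (fun z => h (φ z)) S = h '' chartIm φ S :=
    fun S => image_comp h φ _
  refine ⟨hφ.comp_homeo h, ?_, ?_, ?_⟩
  · rw [him]
    rintro x ⟨x', hx', rfl⟩
    exact h1 x' hx' (h x') (lt_of_lt_of_le (hmove x') (min_le_left _ _))
  · rw [him]
    intro x hx
    refine ⟨h.symm x, ?_, h.apply_symm_apply x⟩
    apply h2 x hx (h.symm x)
    have := hmove (h.symm x)
    rw [h.apply_symm_apply] at this
    rw [dist_comm]
    exact lt_of_lt_of_le this (le_trans (min_le_right _ _) (min_le_left _ _))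
  · rw [him]
    rintro x ⟨x', hx', rfl⟩
    exact h3 x' hx' (h x')
      (lt_of_lt_of_le (hmove x') (le_trans (min_le_right _ _) (min_le_right _ _)))
end
end
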